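/- arXiv:1607.06122 — 10 statements merged into one kernel-verified Lean document; each statement's English description precedes it below -/
import Mathlib

section
/- For n = sm+s-2 with integers s ≥ 3 and m ≥ 1, the inequality (s - 2 - 1/(s-2))·C(n,m) + (s-1)·Σ_{j=1}^{m} C(n, m-j) ≤ C(n, m+1) holds. -/
set_option maxHeartbeats 1000000 in
theorem stmt1 (s m n : ℕ) (hs : 3 ≤ s) (hm : 1 ≤ m) (hn : n = s * m + s - 2) :
    ((s : ℚ) - 2 - 1 / ((s : ℚ) - 2)) * n.choose m
      + ((s : ℚ) - 1) * ∑ j ∈ Finset.Icc 1 m, (n.choose (m - j) : ℚ)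
      ≤ (n.choose (m + 1) : ℚ) := by
  obtain ⟨t, rfl⟩ : ∃ t, s = t + 3 := ⟨s - 3, by omega⟩
  have hn' : n = (t + 3) * m + t + 1 := by omega
  clear hn hs
  have hmn : m + 1 ≤ n := by nlinarith
  -- key ratio lemma in ℕ
  have hkey : ∀ k, k + 1 ≤ m → (t+2)*(m+1) * n.choose k ≤ m * n.choose (k+1) := by
    intro k hk
    have h1 : n.choose (k+1) * (k+1) = n.choose k * (n - k) := Nat.choose_succ_right_eq n k
    obtain ⟨d, hd⟩ : ∃ d, n = k + d := ⟨n - k, by omega⟩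
    have hnk : n - k = d := by omega
    have hmul : (t+2)*(m+1)*(k+1) ≤ m * d := by nlinarith
    have h2 : (t+2)*(m+1) * n.choose k * (k+1) ≤ m * n.choose (k+1) * (k+1) := by
      calc (t+2)*(m+1) * n.choose k * (k+1) = (t+2)*(m+1)*(k+1) * n.choose k := by ring
        _ ≤ m * d * n.choose k := Nat.mul_le_mul_right _ hmul
        _ = m * (n.choose k * (n - k)) := by rw [hnk]; ring
        _ = m * n.choose (k+1) * (k+1) := by rw [← h1]; ring
    exact Nat.le_of_mul_le_mul_right h2 (by omega)
  -- sum self-bound in ℕ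
  set S := ∑ k ∈ Finset.range m, n.choose k with hSdef
  set B := n.choose (m-1) with hBdef
  have hm1 : m = (m-1) + 1 := by omega
  have hsplit : S = (∑ k ∈ Finset.range (m-1), n.choose k) + B := by
    rw [hSdef, hBdef]
    conv_lhs => rw [hm1]
    exact Finset.sum_range_succ _ _
  have hshift : (∑ k ∈ Finset.range (m-1), n.choose (k+1)) + 1 = S := by
    rw [hSdef]
    conv_rhs => rw [hm1]
    rw [Finset.sum_range_succ']
    simp
  have hT : (t+2)*(m+1) * (∑ k ∈ Finset.range (m-1), n.choose k)
      ≤ m * (∑ k ∈ Finset.range (m-1), n.choose (k+1)) := by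
    rw [Finset.mul_sum, Finset.mul_sum]
    apply Finset.sum_le_sum
    intro k hk
    simp only [Finset.mem_range] at hk
    exact hkey k (by omega)
  have hS : (t+2)*(m+1) * S ≤ m * S + (t+2)*(m+1) * B := by
    have h3 : m * (∑ k ∈ Finset.range (m-1), n.choose (k+1)) ≤ m * S := by
      apply Nat.mul_le_mul_left
      omega
    calc (t+2)*(m+1) * S
        = (t+2)*(m+1) * (∑ k ∈ Finset.range (m-1), n.choose k) + (t+2)*(m+1) * B := by
          rw [hsplit]; ring
      _ ≤ m * (∑ k ∈ Finset.range (m-1), n.choose (k+1)) + (t+2)*(m+1) * B :=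
          Nat.add_le_add_right hT _
      _ ≤ m * S + (t+2)*(m+1) * B := Nat.add_le_add_right h3 _
  -- exact ratio identities in ℕ
  have hF1 : n.choose m * m = B * ((t+2)*(m+1)) := by
    have h1 : n.choose ((m-1)+1) * ((m-1)+1) = n.choose (m-1) * (n - (m-1)) :=
      Nat.choose_succ_right_eq n (m-1)
    have e2 : n - (m-1) = (t+2)*(m+1) := by
      have : (t+3)*m = (t+2)*m + m := by ring
      have : (t+2)*(m+1) = (t+2)*m + t + 2 := by ring
      omega
    rw [← hm1, e2] at h1
    exact h1
  have hF2 : n.choose (m+1) * (m+1) = n.choose m * ((t+2)*m + (t+1)) := by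
    have h1 : n.choose (m+1) * (m+1) = n.choose m * (n - m) := Nat.choose_succ_right_eq n m
    have e2 : n - m = (t+2)*m + (t+1) := by
      have : (t+3)*m = (t+2)*m + m := by ring
      omega
    rw [e2] at h1
    exact h1
  -- reindex the goal sum
  have hre : ∑ j ∈ Finset.Icc 1 m, (n.choose (m - j) : ℚ) = (S : ℚ) := by
    rw [hSdef]; push_cast
    apply Finset.sum_nbij' (fun j => m - j) (fun k => m - k)
    · intro a ha; simp [Finset.mem_Icc] at ha ⊢; omega
    · intro a ha; simp [Finset.mem_Icc] at ha ⊢; omega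
    · intro a ha; simp [Finset.mem_Icc] at ha; omega
    · intro a ha; simp at ha; omega
    · intro a ha; rfl
  rw [hre, show (((t+3 : ℕ)) : ℚ) = (t:ℚ)+3 by push_cast; ring]
  -- move to ℚ
  have hSq : ((t:ℚ)+2)*((m:ℚ)+1) * (S:ℚ) ≤ (m:ℚ) * (S:ℚ) + ((t:ℚ)+2)*((m:ℚ)+1) * (B:ℚ) := by
    exact_mod_cast hS
  have hF1q : (n.choose m : ℚ) * (m:ℚ) = (B:ℚ) * (((t:ℚ)+2)*((m:ℚ)+1)) := by exact_mod_cast hF1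
  have hF2q : (n.choose (m+1) : ℚ) * ((m:ℚ)+1)
      = (n.choose m : ℚ) * (((t:ℚ)+2)*(m:ℚ) + ((t:ℚ)+1)) := by exact_mod_cast hF2
  have hA : (0:ℚ) ≤ (n.choose m : ℚ) := by positivity
  have hBq : (0:ℚ) ≤ (B:ℚ) := by positivity
  have hSq0 : (0:ℚ) ≤ (S:ℚ) := by positivity
  have hmq : (1:ℚ) ≤ (m:ℚ) := by exact_mod_cast hm
  have htq : (0:ℚ) ≤ (t:ℚ) := by positivity
  set τ := (t : ℚ) with hτ
  set μ := (m : ℚ) with hμ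
  set A := (n.choose m : ℚ) with hA'
  set C := (n.choose (m+1) : ℚ) with hC'
  set Bq := (B : ℚ) with hB'
  set Sq := (S : ℚ) with hS'
  have ht1 : (0:ℚ) < τ+1 := by linarith
  have e : (τ+3-2 : ℚ) = τ+1 := by ring
  rw [e]
  set u := (1:ℚ)/(τ+1) with hudef
  have hu : u * (τ+1) = 1 := by rw [hudef]; field_simp
  have hupos : 0 < u := by rw [hudef]; positivity
  -- derived: D * Sq ≤ μ * A where D = (τ+1)*μ+τ+2
  have hDS : ((τ+1)*μ+τ+2) * Sq ≤ μ * A := by nlinarith [hSq, hF1q]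
  have hDSA : (τ+2)*(μ+1)*(((τ+1)*μ+τ+2) * Sq) ≤ (τ+2)*(μ+1)*(μ * A) :=
    mul_le_mul_of_nonneg_left hDS (by nlinarith)
  have hF2D : C*(μ+1)*((τ+1)*μ+τ+2) = A*((τ+2)*μ+(τ+1))*((τ+1)*μ+τ+2) := by
    linear_combination ((τ+1)*μ+τ+2) * hF2q
  have h5 : μ*μ*A ≤ u*(((τ+1)*μ+τ+2)*((μ+1)*A)) := by
    have e5 : u*(((τ+1)*μ+τ+2)*((μ+1)*A)) = μ*(μ+1)*A + u*((τ+2)*((μ+1)*A)) := by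
      rw [hudef]; field_simp; ring
    rw [e5]
    nlinarith [mul_nonneg hA (by linarith : (0:ℚ) ≤ μ), mul_nonneg (mul_nonneg hupos.le (by linarith : (0:ℚ) ≤ τ+2)) (mul_nonneg (by linarith : (0:ℚ) ≤ μ+1) hA), mul_nonneg hA (by linarith : (0:ℚ) ≤ μ)]
  have hpos : (0:ℚ) < (μ+1)*((τ+1)*μ+τ+2) := by nlinarith
  nlinarith [hDSA, hF2D, h5, hpos, mul_nonneg hA (by linarith : (0:ℚ) ≤ μ), hSq0, hBq, hA]
end

section
/- For n = sm+s-l with integers s ≥ 3, m ≥ 1 and 2 ≤ l ≤ s, the inequality ((s-l)/2)·C(n,m) ≤ C(n, m+2) holds. -/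
theorem stmt2 (s m l n : ℕ) (hs : 3 ≤ s) (hm : 1 ≤ m) (hl2 : 2 ≤ l) (hls : l ≤ s)
    (hn : n = s * m + s - l) :
    ((s : ℚ) - (l : ℚ)) / 2 * (n.choose m : ℚ) ≤ (n.choose (m + 2) : ℚ) := by
  set t := s - l with htdef
  have hst : s = t + l := by omega
  have hn' : n = s * m + t := by omega
  -- bound on n - m
  have hle : t * m + m + t + 1 ≤ n := by
    have h1 : (t + 2) * m ≤ s * m := Nat.mul_le_mul_right m (by omega)
    have : (t+2)*m = t*m + 2*m := by ring
    omega
  obtain ⟨j, hj⟩ : ∃ j, n = m + 1 + j := ⟨n - (m+1), by omega⟩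
  have hjge : t * m + t ≤ j := by omega
  -- choose identity
  have h1 : n.choose (m+1) * (m+1) = n.choose m * (n - m) := Nat.choose_succ_right_eq n m
  have h2 : n.choose (m+2) * (m+2) = n.choose (m+1) * (n - (m+1)) := Nat.choose_succ_right_eq n (m+1)
  have hnm : n - m = j + 1 := by omega
  have hnm1 : n - (m+1) = j := by omega
  have key : n.choose (m+2) * ((m+1)*(m+2)) = n.choose m * ((j+1)*j) := by
    calc n.choose (m+2) * ((m+1)*(m+2)) = (n.choose (m+2) * (m+2)) * (m+1) := by ring
    _ = n.choose (m+1) * j * (m+1) := by rw [h2, hnm1]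
    _ = (n.choose (m+1) * (m+1)) * j := by ring
    _ = n.choose m * (j+1) * j := by rw [h1, hnm]
    _ = n.choose m * ((j+1)*j) := by ring
  have hineq : t * ((m+1)*(m+2)) ≤ 2 * ((j+1)*j) := by
    rcases Nat.eq_zero_or_pos t with ht0 | ht1
    · simp [ht0]
    · have hjj : (t*m+t)*(t*m+t) ≤ j*j := Nat.mul_le_mul hjge hjge
      nlinarith [hjj, hjge, hm, ht1, Nat.mul_le_mul ht1 hm]
  have hnat : t * n.choose m ≤ 2 * n.choose (m+2) := by
    have := Nat.mul_le_mul_left (n.choose m) hineq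
    have h3 : t * n.choose m * ((m+1)*(m+2)) ≤ 2 * n.choose (m+2) * ((m+1)*(m+2)) := by
      calc t * n.choose m * ((m+1)*(m+2)) = n.choose m * (t * ((m+1)*(m+2))) := by ring
      _ ≤ n.choose m * (2 * ((j+1)*j)) := this
      _ = 2 * (n.choose m * ((j+1)*j)) := by ring
      _ = 2 * (n.choose (m+2) * ((m+1)*(m+2))) := by rw [key]
      _ = 2 * n.choose (m+2) * ((m+1)*(m+2)) := by ring
    exact Nat.le_of_mul_le_mul_right h3 (by positivity)
  have hcast : ((s : ℚ) - l) = (t : ℚ) := by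
    rw [htdef]; push_cast [Nat.cast_sub hls]; ring
  rw [hcast, div_mul_eq_mul_div, div_le_iff₀ (by norm_num : (0:ℚ) < 2)]
  have := (Nat.cast_le (α := ℚ)).mpr hnat
  push_cast at this ⊢
  linarith
end

section
/- Let n = 2s-l where 1 ≤ l < s, and let F ⊆ 2^[n] be a family closed upward with ν(F) < s. Then |2^[n] \ F| ≥ 2(s-l) + 2. -/
/-!
Let `B` be the set of points whose singleton is missing from `F`. Unless `F` contains `∅` (and
then everything), the empty set, the singletons of `B` and the pairs inside `B` missing from `F`
are distinct non-members, so a small complement forces `#B + #(missing pairs in B) ≤ 2(s - l)`.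
Under this bound a greedy choice yields `#B - (s - l)` disjoint pairs of `F` inside `B`, since at
each step the missing pairs cannot exhaust all pairs. The points outside `B` are singletons of
`F`, and as `n = 2s - l` there are enough of them to complete the pairs to `s` disjoint members.
-/

/-- The family `F` contains `s` pairwise disjoint members. -/
def HasMatching {n : ℕ} (F : Finset (Finset (Fin n))) (s : ℕ) : Prop :=
  ∃ 𝒜 : Finset (Finset (Fin n)), 𝒜 ⊆ F ∧ 𝒜.card = s ∧
    (𝒜 : Set (Finset (Fin n))).Pairwise Disjoint

open Finset

section

variable {α : Type*} [DecidableEq α]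

lemma Nat.sub_one_le_choose_two (b : ℕ) : b - 1 ≤ b.choose 2 := by
  cases b with
  | zero => simp
  | succ k => simp [Nat.choose_succ_succ' k 1]

lemma exists_pair_mem_of_card_filter_notMem_lt (F : Finset (Finset α)) {B : Finset α}
    (h : #{P ∈ B.powersetCard 2 | P ∉ F} < (#B).choose 2) :
    ∃ P ∈ F, P ⊆ B ∧ #P = 2 := by
  rw [← card_powersetCard] at h
  obtain ⟨P, hPB, hPF⟩ := exists_mem_notMem_of_card_lt_card h
  simp only [mem_filter, hPB, true_and, not_not] at hPF
  exact ⟨P, hPF, (mem_powersetCard.1 hPB)⟩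

lemma exists_pairwise_disjoint_pairs (F : Finset (Finset α)) (m : ℕ) (B : Finset α)
    (h : #B + #{P ∈ B.powersetCard 2 | P ∉ F} ≤ 2 * m) :
    ∃ 𝒜 ⊆ F, #𝒜 = #B - m ∧ (∀ P ∈ 𝒜, P ⊆ B ∧ #P = 2) ∧
      (𝒜 : Set (Finset α)).Pairwise Disjoint := by
  induction m generalizing B with
  | zero => exact ⟨∅, empty_subset _, by simp only [card_empty]; omega, by simp, by simp⟩
  | succ m ih =>
    by_cases hBm : #B ≤ m + 1
    · exact ⟨∅, empty_subset _, by simp only [card_empty]; omega, by simp, by simp⟩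
    -- at most `#B - 2` pairs are missing, fewer than `(#B).choose 2`
    obtain ⟨P, hPF, hPB, hP2⟩ := exists_pair_mem_of_card_filter_notMem_lt F
      (lt_of_lt_of_le (by omega) (Nat.sub_one_le_choose_two #B))
    have hbad : #{Q ∈ (B \ P).powersetCard 2 | Q ∉ F} ≤ #{Q ∈ B.powersetCard 2 | Q ∉ F} :=
      card_le_card (filter_subset_filter _ (powersetCard_mono sdiff_subset))
    have hcard : #(B \ P) = #B - 2 := by rw [card_sdiff_of_subset hPB, hP2]
    obtain ⟨𝒜, h𝒜F, h𝒜card, h𝒜B, h𝒜⟩ := ih (B \ P) (by omega)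
    have hP𝒜 : P ∉ 𝒜 := fun hP => by
      have : P = ∅ := by simpa using (h𝒜B P hP).1
      simp [this] at hP2
    refine ⟨insert P 𝒜, insert_subset hPF h𝒜F, by rw [card_insert_of_notMem hP𝒜]; omega,
      ?_, ?_⟩
    · simpa [hPB, hP2] using fun Q hQ => ⟨(h𝒜B Q hQ).1.trans sdiff_subset, (h𝒜B Q hQ).2⟩
    · rw [coe_insert, Set.pairwise_insert_of_symm]
      exact ⟨h𝒜, fun Q hQ _ => disjoint_sdiff.mono_right (h𝒜B Q hQ).1⟩

lemma card_add_card_filter_notMem_lt_card_sdiff [Fintype α] {F : Finset (Finset α)}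
    {B : Finset α} (hF : ∅ ∉ F) (hB : ∀ x ∈ B, {x} ∉ F) :
    #B + #{P ∈ B.powersetCard 2 | P ∉ F} < #(univ \ F) := by
  have hdisj : Disjoint (B.powersetCard 1) {P ∈ B.powersetCard 2 | P ∉ F} := by
    refine disjoint_left.2 fun A h1 h2 => ?_
    have := (mem_powersetCard.1 h1).2.symm.trans (mem_powersetCard.1 (mem_filter.1 h2).1).2
    omega
  have hsub : B.powersetCard 1 ∪ {P ∈ B.powersetCard 2 | P ∉ F} ⊆ (univ \ F).erase ∅ := by
    intro A hA
    rcases mem_union.1 hA with h1 | h2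
    · obtain ⟨hAB, hA1⟩ := mem_powersetCard.1 h1
      obtain ⟨x, rfl⟩ := card_eq_one.1 hA1
      simpa using hB x (singleton_subset_iff.1 hAB)
    · obtain ⟨hA, hAF⟩ := mem_filter.1 h2
      have hA2 := (mem_powersetCard.1 hA).2
      simp only [mem_erase, mem_sdiff, mem_univ, hAF, not_false_eq_true, and_true]
      rintro rfl
      simp at hA2
  calc #B + #{P ∈ B.powersetCard 2 | P ∉ F}
      = #(B.powersetCard 1 ∪ {P ∈ B.powersetCard 2 | P ∉ F}) := by
        rw [card_union_of_disjoint hdisj, card_powersetCard, Nat.choose_one_right]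
    _ ≤ #((univ \ F).erase ∅) := card_le_card hsub
    _ < #(univ \ F) := card_erase_lt_of_mem (by simpa using hF)

lemma exists_pairwise_disjoint_union_singletons {F 𝒜 : Finset (Finset α)} {B T : Finset α}
    (h𝒜F : 𝒜 ⊆ F) (h𝒜B : ∀ A ∈ 𝒜, A ⊆ B) (h𝒜 : (𝒜 : Set (Finset α)).Pairwise Disjoint)
    (hTF : ∀ x ∈ T, {x} ∈ F) (hTB : Disjoint T B) :
    ∃ 𝒞 ⊆ F, #𝒞 = #𝒜 + #T ∧ (𝒞 : Set (Finset α)).Pairwise Disjoint := by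
  have hTA : ∀ A ∈ 𝒜, ∀ x ∈ T, x ∉ A := fun A hA x hx hxA =>
    disjoint_left.1 hTB hx (h𝒜B A hA hxA)
  let singletons := T.map ⟨singleton, singleton_injective⟩
  have hdisj : Disjoint 𝒜 singletons := by
    refine disjoint_left.2 fun A hA hAT => ?_
    obtain ⟨x, hx, rfl⟩ := mem_map.1 hAT
    exact hTA _ hA x hx (mem_singleton_self x)
  refine ⟨𝒜 ∪ singletons, union_subset h𝒜F ?_, ?_, ?_⟩
  · intro A hA
    obtain ⟨x, hx, rfl⟩ := mem_map.1 hA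
    exact hTF x hx
  · rw [card_union_of_disjoint hdisj, card_map]
  · rw [coe_union, coe_map, Set.pairwise_union_of_symm]
    refine ⟨h𝒜, ?_, ?_⟩
    · rintro _ ⟨x, -, rfl⟩ _ ⟨y, -, rfl⟩ hxy
      exact disjoint_singleton.2 fun h => hxy (h ▸ rfl)
    · rintro A hA _ ⟨x, hx, rfl⟩ -
      exact disjoint_singleton_right.2 (hTA A hA x hx)

end

theorem stmt4_general (s l n : ℕ) (hls : l < s) (hn : n = 2 * s - l)
    (F : Finset (Finset (Fin n)))
    (hup : ∀ A ∈ F, ∀ B : Finset (Fin n), A ⊆ B → B ∈ F)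
    (hnu : ¬ HasMatching F s) :
    2 * (s - l) + 2 ≤ ((Finset.univ : Finset (Finset (Fin n))) \ F).card := by
  by_contra! hcompl
  apply hnu
  set B : Finset (Fin n) := {x | {x} ∉ F}
  have hB : #B + #{P ∈ B.powersetCard 2 | P ∉ F} ≤ 2 * (s - l) := by
    by_cases hF : ∅ ∈ F
    · have hall : ∀ A, A ∈ F := fun A => hup ∅ hF A (empty_subset A)
      simp [B, hall]
    · have := card_add_card_filter_notMem_lt_card_sdiff hF (B := B) (by simp [B])
      omega
  obtain ⟨𝒜, h𝒜F, h𝒜card, h𝒜B, h𝒜⟩ := exists_pairwise_disjoint_pairs F (s - l) B hB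
  have hBn : #B ≤ n := (card_le_univ B).trans_eq (Fintype.card_fin n)
  obtain ⟨T, hTB, hT⟩ := exists_subset_card_eq (s := Bᶜ) (n := s - #𝒜)
    (by rw [card_compl, Fintype.card_fin]; omega)
  obtain ⟨𝒞, h𝒞F, h𝒞card, h𝒞⟩ := exists_pairwise_disjoint_union_singletons h𝒜F
    (fun P hP => (h𝒜B P hP).1) h𝒜
    (fun x hx => by simpa [B] using hTB hx) (subset_compl_iff_disjoint_right.1 hTB)
  exact ⟨𝒞, h𝒞F, by omega, h𝒞⟩

theorem stmt4 (s l n : ℕ) (hl1 : 1 ≤ l) (hls : l < s) (hn : n = 2 * s - l)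
    (F : Finset (Finset (Fin n)))
    (hup : ∀ A ∈ F, ∀ B : Finset (Fin n), A ⊆ B → B ∈ F)
    (hnu : ¬ HasMatching F s) :
    2 * (s - l) + 2 ≤ ((Finset.univ : Finset (Finset (Fin n))) \ F).card :=
  stmt4_general s l n hls hn F hup hnu
end

section
/- The (i,j)-shift of a family preserves the property D(s,q): if every s pairwise disjoint members F_1,...,F_s of F ⊆ 2^[n] satisfy |F_1 ∪ ... ∪ F_s| > q, then the same holds for S_{i,j}(F). -/
/-- The `(i,j)`-shift of a set. -/
def shiftSet {n : ℕ} (i j : Fin n) (A : Finset (Fin n)) : Finset (Fin n) :=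
  if i ∈ A ∨ j ∉ A then A else insert i (A.erase j)

/-- The `(i,j)`-shift of a family:
`S_{i,j}(F) = {S_{i,j}(A) : A ∈ F} ∪ {A ∈ F : S_{i,j}(A) ∈ F}`. -/
def shiftFam {n : ℕ} (i j : Fin n) (F : Finset (Finset (Fin n))) :
    Finset (Finset (Fin n)) :=
  F.image (shiftSet i j) ∪ F.filter fun A => shiftSet i j A ∈ F

/-- The property `D(s,q)`: every `s` pairwise disjoint members have union of size `> q`. -/
def PropD {n : ℕ} (F : Finset (Finset (Fin n))) (s q : ℕ) : Prop :=
  ∀ 𝒜 : Finset (Finset (Fin n)), 𝒜 ⊆ F → 𝒜.card = s →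
    (𝒜 : Set (Finset (Fin n))).Pairwise Disjoint → q < (𝒜.biUnion id).card

/-! If a pairwise disjoint subfamily `𝒜` of `S_{i,j}(F)` is not contained in `F`, a member
`G ∉ F` arose by a genuine shift, so `i ∈ G`. By disjointness no other member contains `i`, and
on sets avoiding `i` the shift acts as the transposition `(i j)`. Hence `(i j)` maps all of `𝒜`
into `F`, and relabelling the ground set preserves the sizes of disjoint unions. -/

open Finset Equiv

section Relabel

variable {α β : Type*} (e : α ≃ β)

theorem pairwise_disjoint_map_finsetCongr {𝒜 : Finset (Finset α)} :
    (↑(𝒜.map e.finsetCongr.toEmbedding) : Set (Finset β)).Pairwise Disjoint ↔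
      (↑𝒜 : Set (Finset α)).Pairwise Disjoint := by
  rw [coe_map, Set.InjOn.pairwise_image e.finsetCongr.toEmbedding.injective.injOn]
  simp only [Set.Pairwise, Function.onFun, coe_toEmbedding, finsetCongr_apply, disjoint_map]

theorem card_biUnion_map_finsetCongr [DecidableEq α] [DecidableEq β]
    (𝒜 : Finset (Finset α)) :
    ((𝒜.map e.finsetCongr.toEmbedding).biUnion id).card = (𝒜.biUnion id).card := by
  have : (𝒜.map e.finsetCongr.toEmbedding).biUnion id = (𝒜.biUnion id).map e.toEmbedding := by
    simp only [map_eq_image, biUnion_image, image_biUnion, coe_toEmbedding, finsetCongr_apply, id]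
  rw [this, card_map]

end Relabel

theorem PropD.map_finsetCongr {n m s q : ℕ} {F : Finset (Finset (Fin n))} (hF : PropD F s q)
    (e : Fin n ≃ Fin m) : PropD (F.map e.finsetCongr.toEmbedding) s q := by
  intro 𝒜 h𝒜 hcard hdisj
  obtain ⟨ℬ, hℬ, rfl⟩ := subset_map_iff.mp h𝒜
  rw [card_map] at hcard
  rw [pairwise_disjoint_map_finsetCongr] at hdisj
  rw [card_biUnion_map_finsetCongr]
  exact hF ℬ hℬ hcard hdisj

section Shift

variable {n : ℕ} {i j : Fin n} {A G : Finset (Fin n)} {F : Finset (Finset (Fin n))}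

theorem shiftSet_eq_finsetCongr_swap (hi : i ∉ A) :
    shiftSet i j A = (swap i j).finsetCongr A := by
  ext x
  simp only [shiftSet, finsetCongr_apply, mem_map_equiv, symm_swap, swap_apply_def]
  split_ifs <;> grind

theorem shiftSet_eq_self_of_notMem (hi : i ∉ shiftSet i j A) : shiftSet i j A = A := by
  unfold shiftSet at *
  split_ifs at * with h
  · rfl
  · exact absurd (mem_insert_self i _) hi

theorem mem_shiftFam :
    G ∈ shiftFam i j F ↔ (∃ A ∈ F, shiftSet i j A = G) ∨ (G ∈ F ∧ shiftSet i j G ∈ F) := by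
  simp [shiftFam]

theorem shiftSet_mem_of_mem_shiftFam (hG : G ∈ shiftFam i j F) (hi : i ∉ G) :
    shiftSet i j G ∈ F := by
  rcases mem_shiftFam.mp hG with ⟨A, hA, rfl⟩ | ⟨-, hG⟩
  · have hA' := shiftSet_eq_self_of_notMem hi
    rwa [hA', hA']
  · exact hG

theorem finsetCongr_swap_mem_of_mem_shiftFam (hG : G ∈ shiftFam i j F) (hGF : G ∉ F) :
    i ∈ G ∧ (swap i j).finsetCongr G ∈ F := by
  rcases mem_shiftFam.mp hG with ⟨A, hA, rfl⟩ | ⟨hG, -⟩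
  · have hi : i ∈ shiftSet i j A := by
      by_contra hi
      exact hGF (by rwa [shiftSet_eq_self_of_notMem hi])
    refine ⟨hi, ?_⟩
    have hiA : i ∉ A := fun hiA => hGF (by simpa [shiftSet, hiA] using hA)
    rw [shiftSet_eq_finsetCongr_swap hiA]
    rwa [← trans_apply, finsetCongr_trans, swap_swap, finsetCongr_refl, refl_apply]
  · exact absurd hG hGF

theorem subset_or_subset_map_swap_of_subset_shiftFam {𝒜 : Finset (Finset (Fin n))}
    (h𝒜 : 𝒜 ⊆ shiftFam i j F) (hdisj : (↑𝒜 : Set (Finset (Fin n))).Pairwise Disjoint) :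
    𝒜 ⊆ F ∨ 𝒜 ⊆ F.map (swap i j).finsetCongr.toEmbedding := by
  refine or_iff_not_imp_left.mpr fun hsub => ?_
  obtain ⟨G, hG𝒜, hGF⟩ := not_subset.mp hsub
  obtain ⟨hiG, hG⟩ := finsetCongr_swap_mem_of_mem_shiftFam (h𝒜 hG𝒜) hGF
  intro K hK
  rw [mem_map_equiv, finsetCongr_symm, symm_swap]
  obtain rfl | hKG := eq_or_ne K G
  · exact hG
  · have hiK : i ∉ K := fun hiK => disjoint_left.mp (hdisj hK hG𝒜 hKG) hiK hiG
    rw [← shiftSet_eq_finsetCongr_swap hiK]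
    exact shiftSet_mem_of_mem_shiftFam (h𝒜 hK) hiK

end Shift

theorem stmt6_general (n s q : ℕ) (i j : Fin n)
    (F : Finset (Finset (Fin n))) (hF : PropD F s q) :
    PropD (shiftFam i j F) s q := by
  intro 𝒜 h𝒜 hcard hdisj
  rcases subset_or_subset_map_swap_of_subset_shiftFam h𝒜 hdisj with hsub | hsub
  · exact hF 𝒜 hsub hcard hdisj
  · exact hF.map_finsetCongr (swap i j) 𝒜 hsub hcard hdisj

theorem stmt6 (n s q : ℕ) (i j : Fin n) (hij : i < j)
    (F : Finset (Finset (Fin n))) (hF : PropD F s q) :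
    PropD (shiftFam i j F) s q :=
  stmt6_general n s q i j F hF
end

section
/- Let n ≥ q ≥ s and let F ⊆ 2^[n] be a shifted family with the property D(s,q). Then the family F(n) = {A \ {n} : A ∈ F, n ∈ A} of subsets of [n-1] has the property D(s, q-s). -/
open Finset

section Shift

variable {n : ℕ} {F : Finset (Finset (Fin n))} {B : Finset (Fin n)} {i j : Fin n}

lemma shiftSet_mem_of_shiftFam_eq (h : shiftFam i j F = F) {A : Finset (Fin n)} (hA : A ∈ F) :
    shiftSet i j A ∈ F := by
  rw [← h]
  exact mem_union_left _ (mem_image_of_mem _ hA)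

lemma shiftSet_insert (hij : i ≠ j) (hi : i ∉ B) (hj : j ∉ B) :
    shiftSet i j (insert j B) = insert i B := by
  rw [shiftSet, if_neg (by simp [hij, hi]), erase_insert hj]

lemma insert_mem_of_shifted (hshift : ∀ i j : Fin n, i < j → shiftFam i j F = F)
    (hij : i ≤ j) (hi : i ∉ B) (hj : j ∉ B) (hB : insert j B ∈ F) : insert i B ∈ F := by
  obtain rfl | hlt := hij.eq_or_lt
  · exact hB
  · rw [← shiftSet_insert hlt.ne hi hj]
    exact shiftSet_mem_of_shiftFam_eq (hshift i j hlt) hB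

end Shift

section InsertTransversal

variable {α : Type*} [DecidableEq α] {𝒜 : Finset (Finset α)} {f : Finset α → α}

lemma biUnion_image_insert :
    (𝒜.image fun B => insert (f B) B).biUnion id = 𝒜.image f ∪ 𝒜.biUnion id := by
  ext x
  simp only [mem_biUnion, mem_image, id, mem_union]
  grind

lemma card_biUnion_image_insert_le :
    ((𝒜.image fun B => insert (f B) B).biUnion id).card ≤ 𝒜.card + (𝒜.biUnion id).card := by
  rw [biUnion_image_insert]
  exact (card_union_le _ _).trans (Nat.add_le_add_right card_image_le _)

lemma disjoint_insert_insert (h𝒜 : (𝒜 : Set (Finset α)).Pairwise Disjoint)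
    (hf : Set.InjOn f 𝒜) (hfU : ∀ B ∈ 𝒜, f B ∉ 𝒜.biUnion id) {B B' : Finset α} (hB : B ∈ 𝒜)
    (hB' : B' ∈ 𝒜) (hne : B ≠ B') :
    Disjoint (insert (f B) B) (insert (f B') B') := by
  have hnotMem : ∀ {C C'}, C ∈ 𝒜 → C' ∈ 𝒜 → f C ∉ C' := fun hC hC' h =>
    hfU _ hC (subset_biUnion_of_mem id hC' h)
  simp only [disjoint_insert_left, disjoint_insert_right, mem_insert, not_or]
  exact ⟨⟨fun h => hne (hf hB' hB h).symm, hnotMem hB' hB⟩, hnotMem hB hB', h𝒜 hB hB' hne⟩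

lemma pairwise_disjoint_image_insert (h𝒜 : (𝒜 : Set (Finset α)).Pairwise Disjoint)
    (hf : Set.InjOn f 𝒜) (hfU : ∀ B ∈ 𝒜, f B ∉ 𝒜.biUnion id) :
    ((𝒜.image fun B => insert (f B) B : Finset (Finset α)) : Set (Finset α)).Pairwise Disjoint := by
  simp only [coe_image]
  rintro _ ⟨B, hB, rfl⟩ _ ⟨B', hB', rfl⟩ hne
  exact disjoint_insert_insert h𝒜 hf hfU hB hB' fun h => hne (h ▸ rfl)

lemma card_image_insert (h𝒜 : (𝒜 : Set (Finset α)).Pairwise Disjoint)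
    (hf : Set.InjOn f 𝒜) (hfU : ∀ B ∈ 𝒜, f B ∉ 𝒜.biUnion id) :
    (𝒜.image fun B => insert (f B) B).card = 𝒜.card := by
  refine card_image_of_injOn fun B hB B' hB' h => ?_
  by_contra hne
  have hdisj := disjoint_insert_insert h𝒜 hf hfU hB hB' hne
  rw [show insert (f B) B = insert (f B') B' from h, disjoint_self] at hdisj
  exact insert_ne_empty _ _ hdisj

end InsertTransversal

theorem stmt7 (n s q : ℕ) (hq : q ≤ n) (hsq : s ≤ q) (hn : 0 < n)
    (F : Finset (Finset (Fin n)))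
    (hshift : ∀ i j : Fin n, i < j → shiftFam i j F = F)
    (hF : PropD F s q) :
    PropD ((F.filter fun A => (⟨n - 1, by omega⟩ : Fin n) ∈ A).image
      fun A => A.erase (⟨n - 1, by omega⟩ : Fin n)) s (q - s) := by
  set m : Fin n := ⟨n - 1, by omega⟩
  intro 𝒜 h𝒜 hcard hdisj
  have hlink : ∀ B ∈ 𝒜, insert m B ∈ F ∧ m ∉ B := fun B hB => mem_memberSubfamily.1 (h𝒜 hB)
  by_contra! hU
  set U := 𝒜.biUnion id
  have hcardU :
      (𝒜 : Set (Finset (Fin n))).encard ≤ ((Uᶜ : Finset (Fin n)) : Set (Fin n)).encard := by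
    simp only [Set.encard_coe_eq_coe_finsetCard, card_compl, Fintype.card_fin]
    exact_mod_cast (by omega : 𝒜.card ≤ n - U.card)
  have : Nonempty (Fin n) := ⟨m⟩
  obtain ⟨f, hmaps, hf⟩ := 𝒜.finite_toSet.exists_injOn_of_encard_le hcardU
  have hfU : ∀ B ∈ 𝒜, f B ∉ U := fun B hB => mem_compl.1 (hmaps hB)
  have hsub : (𝒜.image fun B => insert (f B) B) ⊆ F := image_subset_iff.2 fun B hB =>
    insert_mem_of_shifted hshift (Nat.le_sub_one_of_lt (f B).isLt)
      (fun h => hfU B hB (subset_biUnion_of_mem id hB h)) (hlink B hB).2 (hlink B hB).1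
  have hbig := hF _ hsub ((card_image_insert hdisj hf hfU).trans hcard)
    (pairwise_disjoint_image_insert hdisj hf hfU)
  have hsmall : _ ≤ 𝒜.card + U.card := card_biUnion_image_insert_le (f := f)
  omega
end

section
/- Fix n ≥ q ≥ s. If f(n-1, q, s) = |B(n-1,q,s)| and f(n-1, q-s, s) = |B(n-1, q-s, s)|, then f(n, q, s) = |B(n,q,s)|. -/
/-- `V` is the maximum size of a `D(s,q)` family on `[n]`, i.e. `f(n,q,s) = V`. -/
def IsMaxD (n s q V : ℕ) : Prop :=
  (∀ F : Finset (Finset (Fin n)), PropD F s q → F.card ≤ V) ∧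
  ∃ F : Finset (Finset (Fin n)), PropD F s q ∧ F.card = V

/-- `B(n, s(m+1)-l, s) = {F ⊆ [n] : |F| + |F ∩ [l-1]| ≥ t}` with `t = m+1`;
for `q - s = sm - l` the threshold is `t = m`. -/
def Bfam (n l t : ℕ) : Finset (Finset (Fin n)) :=
  Finset.univ.filter fun F => t ≤ F.card + (F.filter fun x => x.val < l - 1).card

/-!
Shift towards avoiding the last point `n`: the compressions `𝓒 {i} {n}` keep the size of a
family and preserve `D(s,q)`, because swapping `i` and `n` carries `s` disjoint members of the
compressed family to `s` disjoint members of the original one with a union of the same size.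
For a family `F` stable under all these compressions, `F(n̄)` has `D(s,q)` and `F(n)` has
`D(s,q-s)`: adding `s` distinct fresh points, one of them `n`, to `s` disjoint members of `F(n)`
gives `s` disjoint members of `F`, with a union larger by exactly `s`. Hence
`|F| ≤ f(n-1,q,s) + f(n-1,q-s,s) = |B(n-1,q,s)| + |B(n-1,q-s,s)| = |B(n,q,s)|`, and `B(n,q,s)`
itself has `D(s,q)`, since `s` members of it have total size at least `s(m+1)`, of which at most
`l-1` can come from `[l-1]`.
-/

open Finset
open scoped FinsetFamily

namespace Finset

variable {α : Type*} [DecidableEq α] {i a : α} {A : Finset α}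

lemma map_swap_of_notMem_of_notMem (hi : i ∉ A) (ha : a ∉ A) :
    A.map (Equiv.swap i a).toEmbedding = A := by
  ext x
  rw [mem_map_equiv, Equiv.symm_swap]
  by_cases hxi : x = i
  · subst hxi; simp [hi, ha]
  by_cases hxa : x = a
  · subst hxa; simp [hi, ha]
  rw [Equiv.swap_apply_of_ne_of_ne hxi hxa]

lemma map_swap_of_notMem_of_mem (hi : i ∉ A) (ha : a ∈ A) :
    A.map (Equiv.swap i a).toEmbedding = (A ⊔ {i}) \ {a} := by
  ext x
  rw [mem_map_equiv, Equiv.symm_swap]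
  by_cases hxi : x = i
  · subst hxi
    have hxa : x ≠ a := fun h => hi (h ▸ ha)
    simp [ha, hi, hxa]
  by_cases hxa : x = a
  · subst hxa; simp [hi]
  simp [Equiv.swap_apply_of_ne_of_ne hxi hxa, hxi, hxa]

lemma exists_pairwise_disjoint_insert {𝒜 : Finset (Finset α)} {T : Finset α}
    (h𝒜 : (𝒜 : Set (Finset α)).Pairwise Disjoint)
    (hT : Disjoint T (𝒜.biUnion id)) (hcard : T.card = 𝒜.card) :
    ∃ ℬ : Finset (Finset α), ℬ.card = 𝒜.card ∧ (ℬ : Set (Finset α)).Pairwise Disjoint ∧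
      ℬ.biUnion id ⊆ 𝒜.biUnion id ∪ T ∧ ∀ B ∈ ℬ, ∃ A ∈ 𝒜, ∃ x ∈ T, x ∉ A ∧ B = insert x A := by
  let φ : 𝒜 ≃ T := equivOfCardEq hcard.symm
  let f : 𝒜 → Finset α := fun A => insert (φ A : α) A
  have hTA : ∀ A : 𝒜, Disjoint T A := fun A => (disjoint_biUnion_right _ _ _).1 hT A A.2
  have hφA : ∀ A A' : 𝒜, (φ A : α) ∉ (A' : Finset α) :=
    fun A A' => disjoint_left.1 (hTA A') (φ A).2
  have hf_inj : Function.Injective f := by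
    have hfT : ∀ A, f A \ T = A := fun A => by
      rw [insert_sdiff_of_mem _ (φ A).2, sdiff_eq_self_of_disjoint (hTA A).symm]
    intro A A' h
    exact Subtype.ext (by rw [← hfT A, ← hfT A', h])
  refine ⟨𝒜.attach.image f, by rw [card_image_of_injective _ hf_inj, card_attach], ?_, ?_, ?_⟩
  · simp only [coe_image, coe_attach, Set.image_univ]
    rintro _ ⟨A, rfl⟩ _ ⟨A', rfl⟩ hne
    have hAA' : A ≠ A' := fun h => hne (h ▸ rfl)
    simp only [f]
    rw [disjoint_insert_left, disjoint_insert_right, mem_insert, not_or]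
    exact ⟨⟨fun h => hAA' (φ.injective (Subtype.ext h)), hφA A A'⟩, hφA A' A,
      h𝒜 A.2 A'.2 (fun h => hAA' (Subtype.ext h))⟩
  · intro x hx
    simp only [mem_biUnion, mem_image, mem_attach, true_and, id] at hx
    obtain ⟨_, ⟨A, rfl⟩, hx⟩ := hx
    rcases mem_insert.1 hx with rfl | hx
    · exact mem_union_right _ (φ A).2
    · exact mem_union_left _ (mem_biUnion.2 ⟨A, A.2, hx⟩)
  · simp only [mem_image, mem_attach, true_and]
    rintro _ ⟨A, rfl⟩
    exact ⟨A, A.2, φ A, (φ A).2, hφA A A, rfl⟩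

end Finset

namespace UV

variable {α : Type*} [DecidableEq α] {i a : α} {A : Finset α} {F : Finset (Finset α)}

lemma mem_compression_of_notMem (u : Finset α) (hA : A ∈ F) (ha : a ∉ A) :
    A ∈ 𝓒 u {a} F := by
  have : compress u {a} A = A := by rw [compress, if_neg (by simp [ha])]
  exact mem_compression.2 (Or.inl ⟨hA, by rwa [this]⟩)

lemma map_swap_mem_of_mem_compression_of_notMem (hA : A ∈ 𝓒 {i} {a} F) (hAF : A ∉ F) :
    A.map (Equiv.swap i a).toEmbedding ∈ F := by
  have hi : i ∈ A := singleton_subset_iff.1 (le_of_mem_compression_of_notMem hA hAF)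
  have ha : a ∉ A := disjoint_singleton_left.1 (disjoint_of_mem_compression_of_notMem hA hAF)
  rw [Equiv.swap_comm, map_swap_of_notMem_of_mem ha hi]
  exact sup_sdiff_mem_of_mem_compression_of_notMem hA hAF

lemma map_swap_mem_of_mem_compression_of_left_notMem (hA : A ∈ 𝓒 {i} {a} F) (hi : i ∉ A) :
    A.map (Equiv.swap i a).toEmbedding ∈ F := by
  by_cases ha : a ∈ A
  · rw [map_swap_of_notMem_of_mem hi ha]
    exact sup_sdiff_mem_of_mem_compression hA (singleton_subset_iff.2 ha)
      (disjoint_singleton_left.2 hi)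
  · rw [map_swap_of_notMem_of_notMem hi ha]
    by_contra hAF
    exact hi (singleton_subset_iff.1 (le_of_mem_compression_of_notMem hA hAF))

lemma compress_mem_compression_of_forall_compress_mem (i i' : α)
    (h : ∀ B ∈ F, compress {i'} {a} B ∈ F) (hA : A ∈ 𝓒 {i} {a} F) :
    compress {i'} {a} A ∈ 𝓒 {i} {a} F := by
  by_cases hc : Disjoint {i'} A ∧ {a} ≤ A
  · have hAF : A ∈ F := mem_of_mem_compression hA hc.2 (by simp)
    refine mem_compression_of_notMem _ (h A hAF) ?_
    rw [compress_of_disjoint_of_le hc.1 hc.2]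
    simp
  · rwa [compress, if_neg hc]

lemma insert_mem_of_forall_compress_mem (h : ∀ i, ∀ B ∈ F, compress {i} {a} B ∈ F)
    (hA : insert a A ∈ F) (haA : a ∉ A) {x : α} (hxA : x ∉ A) : insert x A ∈ F := by
  by_cases hxa : x = a
  · rwa [hxa]
  have := h x _ hA
  rwa [compress_of_disjoint_of_le (by simp [hxA, hxa]) (by simp),
    show (insert a A ⊔ {x}) \ {a} = insert x A by ext; aesop] at this

end UV

lemma Fin.exists_map_castSuccEmb_eq {k : ℕ} {A : Finset (Fin (k + 1))} (h : Fin.last k ∉ A) :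
    ∃ A' : Finset (Fin k), A'.map Fin.castSuccEmb = A := by
  have : A ⊆ univ.map Fin.castSuccEmb := by
    rw [← Fin.Iio_last_eq_map]
    exact fun x hx => mem_Iio.2 (Fin.lt_last_iff_ne_last.2 fun hx' => h (hx' ▸ hx))
  obtain ⟨A', -, rfl⟩ := subset_map_iff.1 this
  exact ⟨A', rfl⟩

lemma eq_map_castSuccEmb_of_forall_mem_iff {k : ℕ} {F : Finset (Finset (Fin (k + 1)))}
    {G : Finset (Finset (Fin k))} (hlast : ∀ A ∈ F, Fin.last k ∉ A)
    (hFG : ∀ A : Finset (Fin k), A.map Fin.castSuccEmb ∈ F ↔ A ∈ G) :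
    F = G.map (mapEmbedding Fin.castSuccEmb).toEmbedding := by
  ext A
  constructor
  · intro hA
    obtain ⟨A', rfl⟩ := Fin.exists_map_castSuccEmb_eq (hlast A hA)
    exact mem_map_of_mem _ ((hFG A').1 hA)
  · simp only [mem_map, RelEmbedding.coe_toEmbedding, mapEmbedding_apply]
    rintro ⟨A', hA', rfl⟩
    exact (hFG A').2 hA'

section PropD

variable {n s q : ℕ}

lemma PropD.mono {F G : Finset (Finset (Fin n))} (hF : PropD F s q) (hGF : G ⊆ F) :
    PropD G s q :=
  fun 𝒜 h𝒜 => hF 𝒜 (h𝒜.trans hGF)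

lemma PropD.of_map {m : ℕ} (e : Fin n ↪ Fin m) {F : Finset (Finset (Fin n))}
    {G : Finset (Finset (Fin m))} (hG : PropD G s q) (hFG : ∀ A ∈ F, A.map e ∈ G) :
    PropD F s q := by
  classical
  intro 𝒜 h𝒜F hcard hdisj
  have hdisj' :
      (↑(𝒜.map (mapEmbedding e).toEmbedding) : Set (Finset (Fin m))).Pairwise Disjoint := by
    simp only [coe_map, RelEmbedding.coe_toEmbedding, mapEmbedding_apply]
    rintro _ ⟨A, hA, rfl⟩ _ ⟨A', hA', rfl⟩ hne
    exact (disjoint_map e).2 (hdisj hA hA' (fun h => hne (h ▸ rfl)))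
  have := hG _ (by simpa [subset_iff] using fun A hA => hFG A (h𝒜F hA)) (by simpa) hdisj'
  rw [card_biUnion (t := id) hdisj', sum_map] at this
  simpa [card_biUnion (t := id) hdisj] using this

lemma PropD.compression {F : Finset (Finset (Fin n))} (hF : PropD F s q) (i a : Fin n) :
    PropD (𝓒 {i} {a} F) s q := by
  intro 𝒜 h𝒜 hcard hdisj
  by_cases hsub : 𝒜 ⊆ F
  · exact hF 𝒜 hsub hcard hdisj
  obtain ⟨A₁, hA₁, hA₁F⟩ := not_subset.1 hsub
  have hiA₁ : i ∈ A₁ := singleton_subset_iff.1 (UV.le_of_mem_compression_of_notMem (h𝒜 hA₁) hA₁F)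
  have hswap : ∀ A ∈ 𝒜, A.map (Equiv.swap i a).toEmbedding ∈ F := by
    intro A hA
    by_cases hAA₁ : A = A₁
    · exact UV.map_swap_mem_of_mem_compression_of_notMem (h𝒜 hA) (hAA₁ ▸ hA₁F)
    · exact UV.map_swap_mem_of_mem_compression_of_left_notMem (h𝒜 hA)
        fun hiA => disjoint_left.1 (hdisj hA hA₁ hAA₁) hiA hiA₁
  exact hF.of_map _ hswap 𝒜 Subset.rfl hcard hdisj

lemma exists_propD_forall_compress_mem {F : Finset (Finset (Fin n))} (hF : PropD F s q)
    (a : Fin n) :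
    ∃ G : Finset (Finset (Fin n)), PropD G s q ∧ G.card = F.card ∧
      ∀ i, ∀ A ∈ G, UV.compress {i} {a} A ∈ G := by
  suffices ∀ J : Finset (Fin n), ∃ G : Finset (Finset (Fin n)), PropD G s q ∧
      G.card = F.card ∧ ∀ i ∈ J, ∀ A ∈ G, UV.compress {i} {a} A ∈ G by
    obtain ⟨G, hG, hcard, hJ⟩ := this univ
    exact ⟨G, hG, hcard, fun i => hJ i (mem_univ i)⟩
  intro J
  induction J using Finset.induction_on with
  | empty => exact ⟨F, hF, rfl, by simp⟩
  | insert i J _ ih =>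
    obtain ⟨G, hG, hcard, hJ⟩ := ih
    refine ⟨𝓒 {i} {a} G, hG.compression i a, by rw [UV.card_compression, hcard], ?_⟩
    rintro i' hi' A hA
    rcases mem_insert.1 hi' with rfl | hi'
    · exact UV.compress_mem_compression_of_mem_compression hA
    · exact UV.compress_mem_compression_of_forall_compress_mem i i' (hJ i' hi') hA

lemma PropD.memberSubfamily {F : Finset (Finset (Fin n))} {a : Fin n} (hF : PropD F s q)
    (hs : 0 < s) (hsq : s ≤ q) (hqn : q ≤ n) (hshift : ∀ i, ∀ A ∈ F, UV.compress {i} {a} A ∈ F) :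
    PropD (F.memberSubfamily a) s (q - s) := by
  intro 𝒜 h𝒜 hcard hdisj
  set U := 𝒜.biUnion id
  by_contra! hU
  have haU : a ∉ U := by
    simp only [U, mem_biUnion, id, not_exists, not_and]
    exact fun A hA => (mem_memberSubfamily.1 (h𝒜 hA)).2
  obtain ⟨T, haT, hTU, hTcard⟩ := exists_subsuperset_card_eq (s := {a}) (t := univ \ U) (n := s)
    (by simpa using haU) ((card_singleton a).trans_le hs)
    (by rw [card_univ_sdiff, Fintype.card_fin]; omega)
  obtain ⟨ℬ, hℬcard, hℬdisj, hℬU, hℬ⟩ := exists_pairwise_disjoint_insert hdisj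
    (disjoint_of_subset_left hTU sdiff_disjoint) (hTcard.trans hcard.symm)
  have hℬF : ℬ ⊆ F := by
    intro B hB
    obtain ⟨A, hA, x, -, hxA, rfl⟩ := hℬ B hB
    obtain ⟨haA, haA'⟩ := mem_memberSubfamily.1 (h𝒜 hA)
    exact UV.insert_mem_of_forall_compress_mem hshift haA haA' hxA
  have := hF ℬ hℬF (hℬcard.trans hcard) hℬdisj
  have := (card_le_card hℬU).trans (card_union_le U T)
  omega

lemma card_le_of_forall_last_notMem {k V : ℕ}
    (hV : ∀ G : Finset (Finset (Fin k)), PropD G s q → G.card ≤ V)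
    {F : Finset (Finset (Fin (k + 1)))} (hF : PropD F s q) (hlast : ∀ A ∈ F, Fin.last k ∉ A) :
    F.card ≤ V := by
  set G := univ.filter fun A : Finset (Fin k) => A.map Fin.castSuccEmb ∈ F
  have hFG (A : Finset (Fin k)) : A.map Fin.castSuccEmb ∈ F ↔ A ∈ G := by simp [G]
  rw [eq_map_castSuccEmb_of_forall_mem_iff hlast hFG, card_map]
  exact hV G (hF.of_map Fin.castSuccEmb fun A hA => (hFG A).2 hA)

theorem card_le_add_of_propD {k V W : ℕ} (hs : 0 < s) (hsq : s ≤ q) (hqk : q ≤ k + 1)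
    (hV : ∀ G : Finset (Finset (Fin k)), PropD G s q → G.card ≤ V)
    (hW : ∀ G : Finset (Finset (Fin k)), PropD G s (q - s) → G.card ≤ W)
    {F : Finset (Finset (Fin (k + 1)))} (hF : PropD F s q) : F.card ≤ V + W := by
  obtain ⟨G, hG, hcard, hshift⟩ := exists_propD_forall_compress_mem hF (Fin.last k)
  rw [← hcard, ← card_memberSubfamily_add_card_nonMemberSubfamily (Fin.last k), add_comm]
  exact add_le_add
    (card_le_of_forall_last_notMem hV (hG.mono fun A hA => (mem_nonMemberSubfamily.1 hA).1)
      fun A hA => (mem_nonMemberSubfamily.1 hA).2)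
    (card_le_of_forall_last_notMem hW (hG.memberSubfamily hs hsq hqk hshift)
      fun A hA => (mem_memberSubfamily.1 hA).2)

end PropD

lemma map_castSuccEmb_mem_Bfam {k l t : ℕ} {A : Finset (Fin k)} :
    A.map Fin.castSuccEmb ∈ Bfam (k + 1) l t ↔ A ∈ Bfam k l t := by
  simp only [Bfam, mem_filter, mem_univ, true_and, card_map, filter_map]
  rfl

lemma insert_last_map_castSuccEmb_mem_Bfam {k l t : ℕ} (hl : l ≤ k + 1) {A : Finset (Fin k)} :
    insert (Fin.last k) (A.map Fin.castSuccEmb) ∈ Bfam (k + 1) l (t + 1) ↔ A ∈ Bfam k l t := by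
  have hlast : Fin.last k ∉ A.map Fin.castSuccEmb := by simp
  rw [← map_castSuccEmb_mem_Bfam (l := l) (t := t)]
  simp only [Bfam, mem_filter, mem_univ, true_and]
  rw [filter_insert, if_neg (by simp; omega), card_insert_of_notMem hlast]
  omega

lemma card_Bfam_succ {k l t : ℕ} (hl : l ≤ k + 1) :
    (Bfam (k + 1) l (t + 1)).card = (Bfam k l (t + 1)).card + (Bfam k l t).card := by
  have hlast (A : Finset (Fin k)) : Fin.last k ∉ A.map Fin.castSuccEmb := by simp
  rw [← card_memberSubfamily_add_card_nonMemberSubfamily (Fin.last k), add_comm,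
    eq_map_castSuccEmb_of_forall_mem_iff (G := Bfam k l (t + 1))
      (fun A hA => (mem_nonMemberSubfamily.1 hA).2)
      (fun A => by rw [mem_nonMemberSubfamily, map_castSuccEmb_mem_Bfam]; simp [hlast]),
    eq_map_castSuccEmb_of_forall_mem_iff (G := Bfam k l t)
      (fun A hA => (mem_memberSubfamily.1 hA).2)
      (fun A => by rw [mem_memberSubfamily, insert_last_map_castSuccEmb_mem_Bfam hl]; simp [hlast]),
    card_map, card_map]

lemma propD_Bfam {n s m l : ℕ} (hl0 : 0 < l) (hlq : l ≤ s * (m + 1)) :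
    PropD (Bfam n l (m + 1)) s (s * (m + 1) - l) := by
  intro 𝒜 h𝒜 hcard hdisj
  have hfilter_disj : (𝒜 : Set (Finset (Fin n))).PairwiseDisjoint
      fun A => A.filter fun x => x.val < l - 1 :=
    fun A hA A' hA' h => disjoint_filter_filter (hdisj hA hA' h)
  have hsmall : ∑ A ∈ 𝒜, (A.filter fun x => x.val < l - 1).card ≤ l - 1 := calc
    _ = ((𝒜.biUnion id).filter fun x => x.val < l - 1).card := by
      rw [filter_biUnion, ← card_biUnion hfilter_disj]; rfl
    _ ≤ (univ.filter fun x : Fin n => x.val < l - 1).card :=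
      card_le_card (filter_subset_filter _ (subset_univ _))
    _ ≤ l - 1 := Fin.card_filter_val_lt.trans_le (min_le_right _ _)
  have hlarge : s * (m + 1) ≤ ∑ A ∈ 𝒜, (A.card + (A.filter fun x => x.val < l - 1).card) := by
    rw [← hcard, ← smul_eq_mul]
    exact card_nsmul_le_sum _ _ _ fun A hA => (mem_filter.1 (h𝒜 hA)).2
  rw [sum_add_distrib] at hlarge
  rw [card_biUnion (t := id) hdisj]
  simp only [id]
  omega

theorem stmt8 (n q s m l : ℕ) (hl0 : 0 < l) (hls : l ≤ s)
    (hq : q = s * (m + 1) - l) (hnq : q ≤ n) (hqs : s ≤ q)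
    (h1 : IsMaxD (n - 1) s q ((Bfam (n - 1) l (m + 1)).card))
    (h2 : IsMaxD (n - 1) s (q - s) ((Bfam (n - 1) l m).card)) :
    IsMaxD n s q ((Bfam n l (m + 1)).card) := by
  obtain ⟨k, rfl⟩ : ∃ k, n = k + 1 := Nat.exists_eq_add_one.2 (by omega)
  have hlq : l ≤ s * (m + 1) := hls.trans (Nat.le_mul_of_pos_right s m.succ_pos)
  refine ⟨fun F hF => ?_, Bfam (k + 1) l (m + 1), hq ▸ propD_Bfam hl0 hlq, rfl⟩
  rw [card_Bfam_succ (by omega)]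
  exact card_le_add_of_propD (by omega) hqs hnq h1.1 h2.1 hF
end

section
/- Circle claim: Let s ≥ 3 and let n̄ ≡ t (mod s) with 1 ≤ t < s-1. Arrange 0,1,...,n̄-1 on a circle and for each r let C_r = {r, r+1, ..., r+s-1} (mod n̄). For R ⊆ Z/n̄Z, let f_b(R) = |{r : |C_r ∩ R| = b}|. Then at least one of the following holds: (i) f_0(R) ≥ t; (ii) f_1(R) = 0; (iii) f_2(R) ≥ 2. -/
/-- The cyclic arc `C_r = {r, r+1, ..., r+s-1}` in `Z/n̄Z`. -/
def arc (nbar s : ℕ) [NeZero nbar] (r : ZMod nbar) : Finset (ZMod nbar) :=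
  (Finset.range s).image fun k : ℕ => r + (k : ZMod nbar)

/-- `f_b(R)`: the number of arcs of length `s` meeting `R` in exactly `b` elements. -/
def fcount (nbar s : ℕ) [NeZero nbar] (R : Finset (ZMod nbar)) (b : ℕ) : ℕ :=
  (Finset.univ.filter fun r => (arc nbar s r ∩ R).card = b).card

lemma mem_arc {nbar s : ℕ} [NeZero nbar] {r x : ZMod nbar} :
    x ∈ arc nbar s r ↔ ∃ k < s, x = r + (k : ZMod nbar) := by
  simp [arc, eq_comm]

lemma cast_inj_of_lt {n : ℕ} [NeZero n] {a b : ℕ} (ha : a < n) (hb : b < n)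
    (h : (a : ZMod n) = b) : a = b := by
  have := congrArg ZMod.val h
  rwa [ZMod.val_cast_of_lt ha, ZMod.val_cast_of_lt hb] at this

lemma self_notMem_arc_succ {nbar s : ℕ} [NeZero nbar] (hsn : s < nbar) (r : ZMod nbar) :
    r ∉ arc nbar s (r + 1) := by
  rw [mem_arc]
  rintro ⟨k, hk, h⟩
  have h2 : ((k+1 : ℕ) : ZMod nbar) = ((0:ℕ) : ZMod nbar) := by
    push_cast
    linear_combination -h
  have := cast_inj_of_lt (by omega) (Nat.pos_of_ne_zero (NeZero.ne nbar)) h2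
  omega

lemma shift_notMem_arc {nbar s : ℕ} [NeZero nbar] (hsn : s < nbar) (r : ZMod nbar) :
    r + (s : ZMod nbar) ∉ arc nbar s r := by
  rw [mem_arc]
  rintro ⟨k, hk, h⟩
  have h2 : ((s:ℕ) : ZMod nbar) = ((k:ℕ) : ZMod nbar) := by linear_combination h
  have := cast_inj_of_lt (by omega) (by omega) h2
  omega

lemma card_insert_inter {α : Type*} [DecidableEq α] {a : α} {A R : Finset α} (ha : a ∉ A) :
    ((insert a A) ∩ R).card = (A ∩ R).card + if a ∈ R then 1 else 0 := by
  by_cases h : a ∈ R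
  · rw [Finset.insert_inter_of_mem h,
      Finset.card_insert_of_notMem (by simp [ha])]
    simp [h]
  · rw [Finset.insert_inter_of_notMem h]
    simp [h]

lemma arc_succ (nbar s : ℕ) [NeZero nbar] (r : ZMod nbar) :
    arc nbar (s+1) r = insert (r + (s : ZMod nbar)) (arc nbar s r) := by
  simp [arc, Finset.range_add_one, Finset.image_insert]

lemma arc_succ' (nbar s : ℕ) [NeZero nbar] (r : ZMod nbar) :
    arc nbar (s+1) r = insert r (arc nbar s (r+1)) := by
  ext x
  simp only [mem_arc, Finset.mem_insert]
  constructor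
  · rintro ⟨k, hk, rfl⟩
    rcases k with _ | k'
    · left; simp
    · right; exact ⟨k', by omega, by push_cast; ring⟩
  · rintro (rfl | ⟨k, hk, rfl⟩)
    · exact ⟨0, by omega, by simp⟩
    · exact ⟨k+1, by omega, by push_cast; ring⟩

lemma step_eq {nbar s : ℕ} [NeZero nbar] (hsn : s < nbar) (R : Finset (ZMod nbar)) (r : ZMod nbar) :
    (arc nbar s (r+1) ∩ R).card + (if r ∈ R then 1 else 0)
      = (arc nbar s r ∩ R).card + (if r + (s : ZMod nbar) ∈ R then 1 else 0) := by
  have e1 : ((arc nbar (s+1) r) ∩ R).card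
      = (arc nbar s (r+1) ∩ R).card + (if r ∈ R then 1 else 0) := by
    rw [arc_succ']; exact card_insert_inter (self_notMem_arc_succ hsn r)
  have e2 : ((arc nbar (s+1) r) ∩ R).card
      = (arc nbar s r ∩ R).card + (if r + (s:ZMod nbar) ∈ R then 1 else 0) := by
    rw [arc_succ]; exact card_insert_inter (shift_notMem_arc hsn r)
  omega

lemma step_bound {nbar s : ℕ} [NeZero nbar] (hsn : s < nbar) (R : Finset (ZMod nbar)) (r : ZMod nbar) :
    (arc nbar s (r+1) ∩ R).card ≤ (arc nbar s r ∩ R).card + 1 ∧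
    (arc nbar s r ∩ R).card ≤ (arc nbar s (r+1) ∩ R).card + 1 := by
  have := step_eq hsn R r
  split_ifs at this <;> omega

lemma card_arcs_containing {nbar s : ℕ} [NeZero nbar] (hsn : s ≤ nbar) (x : ZMod nbar) :
    (Finset.univ.filter fun r => x ∈ arc nbar s r).card = s := by
  have h : (Finset.univ.filter fun r => x ∈ arc nbar s r)
      = (Finset.range s).image (fun k : ℕ => x - (k : ZMod nbar)) := by
    ext r
    simp only [Finset.mem_filter, Finset.mem_univ, true_and, Finset.mem_image,
      Finset.mem_range, mem_arc]
    constructor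
    · rintro ⟨k, hk, hxk⟩
      exact ⟨k, hk, by rw [hxk]; ring⟩
    · rintro ⟨k, hk, rfl⟩
      exact ⟨k, hk, by ring⟩
  rw [h, Finset.card_image_of_injOn, Finset.card_range]
  intro a ha b hb hab
  simp only [Finset.coe_range, Set.mem_Iio] at ha hb
  have h2 : ((a:ℕ) : ZMod nbar) = ((b:ℕ) : ZMod nbar) := by linear_combination -hab
  exact cast_inj_of_lt (by omega) (by omega) h2

lemma sum_counts {nbar s : ℕ} [NeZero nbar] (hsn : s ≤ nbar) (R : Finset (ZMod nbar)) :
    ∑ r : ZMod nbar, (arc nbar s r ∩ R).card = s * R.card := by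
  have h1 : ∀ r : ZMod nbar, (arc nbar s r ∩ R).card
      = ∑ x ∈ R, if x ∈ arc nbar s r then 1 else 0 := by
    intro r
    rw [Finset.inter_comm, ← Finset.filter_mem_eq_inter, Finset.card_filter]
  simp_rw [h1]
  rw [Finset.sum_comm]
  have h2 : ∀ x ∈ R, (∑ r : ZMod nbar, if x ∈ arc nbar s r then 1 else 0) = s := by
    intro x _
    rw [← Finset.card_filter]
    exact card_arcs_containing hsn x
  rw [Finset.sum_congr rfl h2, Finset.sum_const, smul_eq_mul, mul_comm]

lemma two_twos {nbar s : ℕ} [NeZero nbar] (hsn : s < nbar) (R : Finset (ZMod nbar))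
    (r0 r1 : ZMod nbar)
    (h0 : (arc nbar s r0 ∩ R).card = 1) (h1 : 3 ≤ (arc nbar s r1 ∩ R).card) :
    2 ≤ fcount nbar s R 2 := by
  set c : ZMod nbar → ℕ := fun r => (arc nbar s r ∩ R).card with hc
  set d : ℕ → ℕ := fun i => c (r0 + (i : ZMod nbar)) with hd
  have hstep : ∀ i : ℕ, d (i+1) ≤ d i + 1 ∧ d i ≤ d (i+1) + 1 := by
    intro i
    have hcast : ((i+1 : ℕ) : ZMod nbar) = ((i:ℕ) : ZMod nbar) + 1 := by push_cast; ring
    have := step_bound hsn R (r0 + (i : ZMod nbar))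
    simp only [hd, hc, hcast, ← add_assoc]
    exact this
  have hd0 : d 0 = 1 := by simp [hd, hc, h0]
  have hdn : d nbar = 1 := by
    simp [hd, hc, ZMod.natCast_self, h0]
  have hval : ((r1 - r0).val : ZMod nbar) = r1 - r0 := ZMod.natCast_rightInverse _
  set i1 := (r1 - r0).val with hi1
  have hi1n : i1 < nbar := ZMod.val_lt _
  have hr0i1 : r0 + (i1 : ZMod nbar) = r1 := by rw [hval]; ring
  have hdi1 : 3 ≤ d i1 := by
    simp only [hd, hc, hr0i1]; exact h1
  have hi1pos : 0 < i1 := by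
    rcases Nat.eq_zero_or_pos i1 with h | h
    · exfalso
      have : d 0 = d i1 := by rw [h]
      omega
    · exact h
  -- first crossing of 2
  have hex : ∃ j, 2 ≤ d j := ⟨i1, by omega⟩
  set j1 := Nat.find hex with hj1
  have hj1spec : 2 ≤ d j1 := Nat.find_spec hex
  have hj1le : j1 ≤ i1 := Nat.find_le (by omega)
  have hj1pos : 0 < j1 := by
    rcases Nat.eq_zero_or_pos j1 with h | h
    · exfalso; rw [h] at hj1spec; omega
    · exact h
  have hj1prev : ¬ 2 ≤ d (j1 - 1) := Nat.find_min hex (by omega)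
  have hdj1 : d j1 = 2 := by
    have h := (hstep (j1 - 1)).1
    have e : j1 - 1 + 1 = j1 := by omega
    rw [e] at h
    omega
  -- last crossing of 2
  set j2 := Nat.findGreatest (fun j => 2 ≤ d j) nbar with hj2
  have hj2spec : 2 ≤ d j2 :=
    Nat.findGreatest_spec (P := fun j => 2 ≤ d j) (m := i1) (by omega) (by omega)
  have hj2ge : i1 ≤ j2 :=
    Nat.le_findGreatest (P := fun j => 2 ≤ d j) (by omega) (by omega)
  have hj2le : j2 ≤ nbar := Nat.findGreatest_le nbar
  have hj2lt : j2 < nbar := by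
    rcases Nat.lt_or_ge j2 nbar with h | h
    · exact h
    · exfalso; have : j2 = nbar := by omega
      rw [this] at hj2spec; omega
  have hj2next : ¬ 2 ≤ d (j2 + 1) :=
    Nat.findGreatest_is_greatest (P := fun j => 2 ≤ d j) (n := nbar) (k := j2 + 1) (by omega) (by omega)
  have hdj2 : d j2 = 2 := by
    have := (hstep j2).2
    omega
  have hj1j2 : j1 < j2 := by
    rcases Nat.lt_or_ge j1 j2 with h | h
    · exact h
    · exfalso
      have : j1 = i1 := by omega
      rw [this] at hdj1; omega
  -- two distinct positions with count 2
  set a := r0 + (j1 : ZMod nbar) with ha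
  set b := r0 + (j2 : ZMod nbar) with hb
  have hab : a ≠ b := by
    intro h
    have h2 : ((j1:ℕ) : ZMod nbar) = ((j2:ℕ) : ZMod nbar) := by
      rwa [ha, hb, add_right_inj] at h
    have := cast_inj_of_lt (show j1 < nbar by omega) (by omega) h2
    omega
  have hsub : ({a, b} : Finset (ZMod nbar))
      ⊆ Finset.univ.filter (fun r => (arc nbar s r ∩ R).card = 2) := by
    intro x hx
    simp only [Finset.mem_insert, Finset.mem_singleton] at hx
    rcases hx with rfl | rfl
    · simp only [Finset.mem_filter, Finset.mem_univ, true_and]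
      exact hdj1
    · simp only [Finset.mem_filter, Finset.mem_univ, true_and]
      exact hdj2
  calc 2 = ({a, b} : Finset (ZMod nbar)).card := by
        rw [Finset.card_insert_of_notMem (by simpa using hab), Finset.card_singleton]
    _ ≤ _ := Finset.card_le_card hsub

theorem stmt9 (nbar s t : ℕ) [NeZero nbar] (hs : 3 ≤ s) (hns : s ≤ nbar)
    (ht1 : 1 ≤ t) (ht2 : t < s - 1) (hmod : nbar % s = t)
    (R : Finset (ZMod nbar)) :
    t ≤ fcount nbar s R 0 ∨ fcount nbar s R 1 = 0 ∨ 2 ≤ fcount nbar s R 2 := by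
  by_contra hcon
  push_neg at hcon
  obtain ⟨h0, h1, h2⟩ := hcon
  have hsn : s < nbar := by
    rcases eq_or_lt_of_le hns with h | h
    · exfalso; rw [← h, Nat.mod_self] at hmod; omega
    · exact h
  -- a position with count 1
  have hne : (Finset.univ.filter fun r => (arc nbar s r ∩ R).card = 1).Nonempty :=
    Finset.card_pos.mp (Nat.pos_of_ne_zero h1)
  obtain ⟨r0, hr0mem⟩ := hne
  have hr0 : (arc nbar s r0 ∩ R).card = 1 := (Finset.mem_filter.mp hr0mem).2
  -- all counts ≤ 2
  have hle2 : ∀ r : ZMod nbar, (arc nbar s r ∩ R).card ≤ 2 := by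
    intro r
    by_contra h
    push_neg at h
    exact absurd (two_twos hsn R r0 r hr0 (by omega)) (by omega)
  -- counting identities
  have hsum : ∑ r : ZMod nbar, (arc nbar s r ∩ R).card = s * R.card :=
    sum_counts (le_of_lt hsn) R
  have hf1 : fcount nbar s R 1
      = ∑ r : ZMod nbar, if (arc nbar s r ∩ R).card = 1 then 1 else 0 := by
    rw [fcount, Finset.card_filter]
  have hf2 : fcount nbar s R 2
      = ∑ r : ZMod nbar, if (arc nbar s r ∩ R).card = 2 then 1 else 0 := by
    rw [fcount, Finset.card_filter]
  have hf0 : fcount nbar s R 0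
      = ∑ r : ZMod nbar, if (arc nbar s r ∩ R).card = 0 then 1 else 0 := by
    rw [fcount, Finset.card_filter]
  have hkey1 : fcount nbar s R 1 + 2 * fcount nbar s R 2 = s * R.card := by
    rw [← hsum, hf1, hf2, Finset.mul_sum, ← Finset.sum_add_distrib]
    refine Finset.sum_congr rfl fun r _ => ?_
    have := hle2 r
    split_ifs <;> omega
  have hkey2 : fcount nbar s R 0 + fcount nbar s R 1 + fcount nbar s R 2 = nbar := by
    have hn : (nbar : ℕ) = ∑ _r : ZMod nbar, 1 := by
      rw [Finset.sum_const, smul_eq_mul, mul_one, Finset.card_univ, ZMod.card]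
    rw [hf0, hf1, hf2, ← Finset.sum_add_distrib, ← Finset.sum_add_distrib]
    conv_rhs => rw [hn]
    refine Finset.sum_congr rfl fun r _ => ?_
    have := hle2 r
    split_ifs <;> omega
  -- final arithmetic
  set q := nbar / s with hqdef
  have hq : nbar = s * q + t := by
    rw [← hmod, hqdef]
    exact (Nat.div_add_mod nbar s).symm
  have key : s * q < s * R.card ∧ s * R.card < s * (q + 1) := by
    have e : s * (q + 1) = s * q + s := by ring
    rw [e]
    rw [← hkey1]
    generalize s * q = A at hq ⊢
    omega
  have k1 : q < R.card := lt_of_mul_lt_mul_left key.1 (Nat.zero_le s)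
  have k2 : R.card < q + 1 := lt_of_mul_lt_mul_left key.2 (Nat.zero_le s)
  omega
end

section
/- Cross-dependent nested families bound: Let N ≥ (u+s-1)(k-1) with u ≥ s+1 ≥ 2, and let F_1 ⊇ F_2 ⊇ ... ⊇ F_s ⊆ C(N, k-1) (families of (k-1)-subsets of [N]) be cross-dependent: for any choice F_i ∈ F_i (i = 1,...,s) some two of the chosen sets intersect. Then |F_1| + ... + |F_{s-1}| + u·|F_s| ≤ (s-1)·C(N, k-1). -/
/-!
Index the families as `F_0 ⊇ ⋯ ⊇ F_{s-1}` and average over all sequences `b` of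
`t = u + s - 1` pairwise disjoint `(k-1)`-subsets of `[N]` (they exist because `N ≥ t (k-1)`);
every `(k-1)`-set occurs equally often in each position. For a fixed `b` let `m_i` be the number
of positions `j` with `b j ∈ F_i`; nesting makes `m` antitone. If `m_i ≥ s - i` for every `i`,
Hall's condition holds and `b` contains a system of disjoint representatives, so
cross-dependence gives some `i₀` with `m_{i₀} ≤ s - 1 - i₀`. Then
`m_0 + ⋯ + m_{s-2} + u m_{s-1} ≤ i₀ t + (s - 1 - i₀)(s - 1 + u) ≤ (s - 1) t`, and averaging
this over all `b` yields the bound.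
-/

open Finset Function

section DisjointTuples

variable {α : Type*} {k t : ℕ} {S : Finset α}

open Classical in
noncomputable def disjointTuples (k t : ℕ) (S : Finset α) : Finset (Fin t → Finset α) :=
  {b ∈ Fintype.piFinset fun _ => S.powersetCard k | Pairwise (Disjoint on b)}

theorem mem_disjointTuples {b : Fin t → Finset α} :
    b ∈ disjointTuples k t S ↔ (∀ j, b j ∈ S.powersetCard k) ∧ Pairwise (Disjoint on b) := by
  simp [disjointTuples]

theorem comp_perm_mem_disjointTuples {b : Fin t → Finset α} (σ : Equiv.Perm (Fin t)) :
    b ∘ σ ∈ disjointTuples k t S ↔ b ∈ disjointTuples k t S := by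
  rw [mem_disjointTuples, mem_disjointTuples]
  exact and_congr (σ.forall_congr_right (q := fun j => b j ∈ S.powersetCard k))
    (EquivLike.pairwise_comp_iff σ (Disjoint on b))

variable [DecidableEq α]

theorem cons_mem_disjointTuples {B : Finset α} {c : Fin t → Finset α} :
    Fin.cons B c ∈ disjointTuples k (t + 1) S ↔
      B ∈ S.powersetCard k ∧ c ∈ disjointTuples k t (S \ B) := by
  simp only [mem_disjointTuples, Fin.forall_fin_succ, Fin.cons_zero, Fin.cons_succ,
    pairwise_fin_succ_iff_of_isSymm, onFun, mem_powersetCard, subset_sdiff]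
  grind

theorem card_filter_head_mem_disjointTuples {F : Finset (Finset α)}
    (hF : F ⊆ S.powersetCard k) :
    #{b ∈ disjointTuples k (t + 1) S | b 0 ∈ F} = ∑ B ∈ F, #(disjointTuples k t (S \ B)) := by
  rw [card_eq_sum_card_fiberwise (s := {b ∈ disjointTuples k (t + 1) S | b 0 ∈ F}) (t := F)
    (f := fun b => b 0) fun b hb => (mem_filter.1 hb).2]
  refine sum_congr rfl fun B hB => card_nbij' Fin.tail (fun c => Fin.cons B c) ?_ ?_ ?_ ?_
  · intro b hb
    simp only [coe_filter, mem_filter, Set.mem_ofPred_eq] at hb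
    obtain ⟨⟨hb, -⟩, rfl⟩ := hb
    rw [← Fin.cons_self_tail b, cons_mem_disjointTuples] at hb
    exact hb.2
  · intro c hc
    simp_all [cons_mem_disjointTuples, hF hB]
  · intro b hb
    simp only [coe_filter, Set.mem_ofPred_eq] at hb
    rw [← hb.2]
    exact Fin.cons_self_tail b
  · intro c _
    exact Fin.tail_cons (α := fun _ => Finset α) B c

theorem card_disjointTuples :
    #(disjointTuples k t S) = ∏ j ∈ range t, (#S - j * k).choose k := by
  induction t generalizing S with
  | zero => simp [disjointTuples]
  | succ t ih =>
    have hhead : ∀ b ∈ disjointTuples k (t + 1) S, b 0 ∈ S.powersetCard k :=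
      fun b hb => (mem_disjointTuples.1 hb).1 0
    rw [← filter_true_of_mem hhead, card_filter_head_mem_disjointTuples subset_rfl,
      prod_range_succ', zero_mul, Nat.sub_zero, mul_comm]
    rw [sum_congr rfl (g := fun _ => ∏ j ∈ range t, (#S - (j + 1) * k).choose k) fun B hB => ?_,
      sum_const, card_powersetCard, smul_eq_mul]
    rw [ih, card_sdiff_of_subset (mem_powersetCard.1 hB).1, (mem_powersetCard.1 hB).2]
    simp only [Nat.sub_sub, add_mul, one_mul, add_comm]

theorem card_disjointTuples_sdiff {B : Finset α} (hB : B ∈ S.powersetCard k) :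
    #(disjointTuples k t (S \ B)) = ∏ j ∈ range t, (#S - (j + 1) * k).choose k := by
  rw [card_disjointTuples, card_sdiff_of_subset (mem_powersetCard.1 hB).1,
    (mem_powersetCard.1 hB).2]
  simp only [Nat.sub_sub, add_mul, one_mul, add_comm]

theorem card_filter_mem_disjointTuples_eq_head (F : Finset (Finset α)) (j : Fin (t + 1)) :
    #{b ∈ disjointTuples k (t + 1) S | b j ∈ F} =
      #{b ∈ disjointTuples k (t + 1) S | b 0 ∈ F} := by
  have hσ : ∀ b, b ∘ Equiv.swap 0 j ∈ disjointTuples k (t + 1) S ↔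
      b ∈ disjointTuples k (t + 1) S :=
    fun b => comp_perm_mem_disjointTuples _
  refine card_nbij' (· ∘ Equiv.swap 0 j) (· ∘ Equiv.swap 0 j) ?_ ?_ ?_ ?_ <;>
    intro b hb <;> simp_all [comp_def]

theorem sum_card_filter_mem_disjointTuples {F : Finset (Finset α)}
    (hF : F ⊆ S.powersetCard k) :
    ∑ b ∈ disjointTuples k (t + 1) S, #{j | b j ∈ F} =
      (t + 1) * (#F * ∏ j ∈ range t, (#S - (j + 1) * k).choose k) := by
  have hhead : #{b ∈ disjointTuples k (t + 1) S | b 0 ∈ F} =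
      #F * ∏ j ∈ range t, (#S - (j + 1) * k).choose k := by
    rw [card_filter_head_mem_disjointTuples hF, ← smul_eq_mul, ← sum_const]
    exact sum_congr rfl fun B hB => card_disjointTuples_sdiff (hF hB)
  have hcount := sum_card_bipartiteAbove_eq_sum_card_bipartiteBelow
    (s := disjointTuples k (t + 1) S) (t := univ) fun b j => b j ∈ F
  simp only [bipartiteAbove, bipartiteBelow] at hcount
  simp only [hcount, card_filter_mem_disjointTuples_eq_head, hhead, sum_const, card_univ,
    Fintype.card_fin, smul_eq_mul]

theorem mul_sum_card_le_of_forall_disjointTuples {ι : Type*} [Fintype ι] (w : ι → ℕ)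
    {F : ι → Finset (Finset α)} (hF : ∀ i, F i ⊆ S.powersetCard k) (hS : (t + 1) * k ≤ #S)
    {M : ℕ} (hM : ∀ b ∈ disjointTuples k (t + 1) S, ∑ i, w i * #{j | b j ∈ F i} ≤ M) :
    (t + 1) * ∑ i, w i * #(F i) ≤ M * (#S).choose k := by
  set E := ∏ j ∈ range t, (#S - (j + 1) * k).choose k
  have hE : 0 < E := prod_pos fun j hj => Nat.choose_pos <| by
    have : (j + 2) * k ≤ (t + 1) * k := Nat.mul_le_mul_right k (by simpa using hj)
    rw [add_mul] at this ⊢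
    omega
  have hD : #(disjointTuples k (t + 1) S) = (#S).choose k * E := by
    rw [card_disjointTuples, prod_range_succ', mul_comm, zero_mul, Nat.sub_zero]
  refine le_of_mul_le_mul_left ?_ hE
  calc E * ((t + 1) * ∑ i, w i * #(F i))
      = ∑ i, w i * ∑ b ∈ disjointTuples k (t + 1) S, #{j | b j ∈ F i} := by
        simp only [sum_card_filter_mem_disjointTuples (hF _), mul_sum]
        exact sum_congr rfl fun i _ => by ring
    _ = ∑ b ∈ disjointTuples k (t + 1) S, ∑ i, w i * #{j | b j ∈ F i} := by
        simp only [mul_sum]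
        exact sum_comm
    _ ≤ #(disjointTuples k (t + 1) S) * M := sum_le_card_nsmul _ _ _ hM
    _ = E * (M * (#S).choose k) := by rw [hD]; ring

end DisjointTuples

theorem exists_injective_mem_of_le_card_add {β : Type*} [DecidableEq β] {s : ℕ}
    {A : Fin s → Finset β} (hcard : ∀ i, s ≤ #(A i) + i) :
    ∃ f : Fin s → β, Injective f ∧ ∀ i, f i ∈ A i := by
  refine (all_card_le_biUnion_card_iff_exists_injective A).1 fun I => ?_
  rcases I.eq_empty_or_nonempty with rfl | hI
  · simp
  calc #I ≤ #(Ici (I.min' hI)) := card_le_card fun i hi => mem_Ici.2 (I.min'_le i hi)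
    _ ≤ #(A (I.min' hI)) := by have := hcard (I.min' hI); rw [Fin.card_Ici]; omega
    _ ≤ #(I.biUnion A) := card_le_card (subset_biUnion_of_mem A (I.min'_mem hI))

theorem exists_card_filter_mem_add_lt {α : Type*} [DecidableEq α] {s t : ℕ}
    {F : Fin s → Finset (Finset α)}
    (hcross : ∀ f : Fin s → Finset α, (∀ i, f i ∈ F i) → ∃ i j, i ≠ j ∧ ¬ Disjoint (f i) (f j))
    {b : Fin t → Finset α} (hb : Pairwise (Disjoint on b)) :
    ∃ i : Fin s, #{j | b j ∈ F i} + i < s := by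
  by_contra! hcard
  obtain ⟨f, hf, hfF⟩ := exists_injective_mem_of_le_card_add hcard
  obtain ⟨i, j, hij, hnot⟩ := hcross (b ∘ f) fun i => (mem_filter.1 (hfF i)).2
  exact hnot (hb (hf.ne hij))

theorem sum_ite_eq_last_mul_le {s t u : ℕ} {m : Fin s → ℕ} (hm : Antitone m)
    (hmt : ∀ i, m i ≤ t) (hut : u + s ≤ t + 1) {i₀ : Fin s} (hi₀ : m i₀ + i₀ < s) :
    ∑ i : Fin s, (if i.val = s - 1 then u else 1) * m i ≤ (s - 1) * t := by
  set r := s - 1 - i₀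
  have hterm : ∀ i : Fin s, (if i.val = s - 1 then u else 1) * m i ≤
      (if i.val < i₀ then t else 0) + (if i.val = s - 1 then u else 1) * r := by
    intro i
    by_cases hi : i.val < i₀
    · have hlast : i.val ≠ s - 1 := by omega
      rw [if_pos hi, if_neg hlast, one_mul, one_mul]
      exact le_add_right (hmt i)
    · have : m i ≤ r := (hm (show i₀ ≤ i from Fin.le_def.2 (by omega))).trans (by omega)
      rw [if_neg hi, zero_add]
      exact Nat.mul_le_mul_left _ this
  have hfirst : ∑ i : Fin s, (if i.val < i₀ then t else 0) = i₀ * t := by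
    rw [sum_ite, sum_const_zero, add_zero, sum_const, Fin.card_filter_val_lt, smul_eq_mul,
      min_eq_right i₀.isLt.le]
  have hweights : ∑ i : Fin s, (if i.val = s - 1 then u else 1) = s - 1 + u := by
    obtain ⟨n, rfl⟩ : ∃ n, s = n + 1 := ⟨s - 1, by omega⟩
    simp only [Fin.sum_univ_castSucc, Fin.val_castSucc, Fin.val_last, Nat.add_sub_cancel]
    simp [Nat.ne_of_lt]
  calc ∑ i : Fin s, (if i.val = s - 1 then u else 1) * m i
      ≤ i₀ * t + (s - 1 + u) * r := by
        rw [← hfirst, ← hweights, sum_mul, ← sum_add_distrib]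
        exact sum_le_sum fun i _ => hterm i
    _ ≤ i₀ * t + t * r := by gcongr; omega
    _ = (s - 1) * t := by rw [mul_comm t, ← add_mul]; congr 1; omega

theorem stmt12 (N k u s : ℕ) (hs : 1 ≤ s) (hu : s + 1 ≤ u)
    (hN : (u + s - 1) * (k - 1) ≤ N)
    (𝒻 : Fin s → Finset (Finset (Fin N)))
    (huniform : ∀ i, 𝒻 i ⊆ Finset.powersetCard (k - 1) Finset.univ)
    (hnested : ∀ i j : Fin s, i ≤ j → 𝒻 j ⊆ 𝒻 i)
    (hcross : ∀ f : Fin s → Finset (Fin N), (∀ i, f i ∈ 𝒻 i) →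
      ∃ i j, i ≠ j ∧ ¬ Disjoint (f i) (f j)) :
    ∑ i : Fin s, (if i.val = s - 1 then u else 1) * (𝒻 i).card
      ≤ (s - 1) * N.choose (k - 1) := by
  obtain ⟨t, ht⟩ : ∃ t, u + s - 1 = t + 1 := ⟨u + s - 2, by omega⟩
  have hpoint : ∀ b ∈ disjointTuples (k - 1) (t + 1) univ,
      ∑ i, (if i.val = s - 1 then u else 1) * #{j | b j ∈ 𝒻 i} ≤ (s - 1) * (t + 1) := by
    intro b hb
    obtain ⟨i₀, hi₀⟩ := exists_card_filter_mem_add_lt hcross (mem_disjointTuples.1 hb).2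
    refine sum_ite_eq_last_mul_le (fun i j hij => ?_) (fun i => ?_) (by omega) hi₀
    · exact card_le_card (monotone_filter_right _ fun _ _ h => hnested i j hij h)
    · exact (card_le_univ _).trans_eq (Fintype.card_fin _)
  have hmain := mul_sum_card_le_of_forall_disjointTuples _ huniform
    (by rwa [card_univ, Fintype.card_fin, ← ht]) hpoint
  rw [card_univ, Fintype.card_fin, mul_comm (s - 1), mul_assoc] at hmain
  exact le_of_mul_le_mul_left hmain t.succ_pos
end

section
/- Let n = sm+s-l with 1 ≤ u ≤ s-l, and let F ⊆ 2^[n] with ν(F) < s. With π_e the partition of sm into s equal parts m and X_i, y as defined, the shadow-type bound y(m+u) ≥ (1/s)·C(n, m+u)·Σ_{i=1}^{⌊(s-l)/u⌋} X_i(π_e) holds. -/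
/-- The `s`-tuples of pairwise disjoint subsets of `[n]` of type `π = (p 0, ..., p (s-1))`. -/
def tuples (n s : ℕ) (p : Fin s → ℕ) : Finset (Fin s → Finset (Fin n)) :=
  Finset.univ.filter fun f =>
    (∀ r, (f r).card = p r) ∧ ∀ i j, i ≠ j → Disjoint (f i) (f j)

/-- `C_i(π)`: tuples of type `π` with exactly `i` coordinates not in `F`. -/
def Ctuples (n s : ℕ) (F : Finset (Finset (Fin n))) (p : Fin s → ℕ) (i : ℕ) :
    Finset (Fin s → Finset (Fin n)) :=
  (tuples n s p).filter fun f => (Finset.univ.filter fun r => f r ∉ F).card = i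

/-- `y(q)`: the number of `q`-subsets of `[n]` not in `F`. -/
def ymiss (n : ℕ) (F : Finset (Finset (Fin n))) (q : ℕ) : ℕ :=
  (Finset.univ.filter fun A : Finset (Fin n) => A.card = q ∧ A ∉ F).card

/-- `X_i(π_e)` for the partition of `sm` into `s` equal parts `m`. -/
noncomputable def Xe (n s m : ℕ) (F : Finset (Finset (Fin n))) (i : ℕ) : ℚ :=
  ((Ctuples n s F (fun _ => m) i).card : ℚ) / ((tuples n s (fun _ => m)).card : ℚ)


open Finset
open scoped Nat

section DisjTuples

variable {α : Type*} [DecidableEq α] [Fintype α]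

def disjTuples (S : Finset α) {k : ℕ} (p : Fin k → ℕ) : Finset (Fin k → Finset α) :=
  univ.filter fun f => (∀ r, f r ⊆ S ∧ #(f r) = p r) ∧ ∀ i j, i ≠ j → Disjoint (f i) (f j)

variable {S : Finset α} {k : ℕ}

theorem mem_disjTuples {p : Fin k → ℕ} {f : Fin k → Finset α} :
    f ∈ disjTuples S p ↔
      (∀ r, f r ⊆ S ∧ #(f r) = p r) ∧ ∀ i j, i ≠ j → Disjoint (f i) (f j) := by
  simp [disjTuples]

theorem card_filter_disjTuples_apply_eq {p : Fin (k + 1) → ℕ} {j : Fin (k + 1)} {U : Finset α}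
    (hU : U ⊆ S) (hUc : #U = p j) :
    #((disjTuples S p).filter (· j = U)) = #(disjTuples (S \ U) (j.removeNth p)) := by
  refine card_nbij' (j.removeNth ·) (fun g : Fin k → Finset α => j.insertNth U g)
    ?_ ?_ ?_ ?_
  · intro w hw
    simp only [coe_filter, mem_disjTuples, Set.mem_ofPred_eq, mem_coe] at hw ⊢
    obtain ⟨⟨hsub, hdisj⟩, rfl⟩ := hw
    exact ⟨fun r => ⟨subset_sdiff.2 ⟨(hsub _).1, hdisj _ _ (j.succAbove_ne r)⟩, (hsub _).2⟩,
      fun a b hab => hdisj _ _ (j.succAbove_right_injective.ne hab)⟩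
  · intro g hg
    simp only [coe_filter, mem_disjTuples, Set.mem_ofPred_eq, mem_coe] at hg ⊢
    refine ⟨⟨fun r => ?_, fun a b hab => ?_⟩, Fin.insertNth_apply_same _ _ _⟩
    · cases r using j.succAboveCases with
      | x => simpa using ⟨hU, hUc⟩
      | p i => simpa using ⟨(hg.1 i).1.trans sdiff_subset, (hg.1 i).2⟩
    · cases a using j.succAboveCases <;> cases b using j.succAboveCases
      · exact absurd rfl hab
      · simpa using (disjoint_sdiff.mono_right (hg.1 _).1)
      · simpa using (sdiff_disjoint.mono_left (hg.1 _).1)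
      · simpa using hg.2 _ _ (fun h => hab (congrArg _ h))
  · intro w hw
    simp only [coe_filter, Set.mem_ofPred_eq] at hw
    rw [← hw.2]
    exact Fin.insertNth_self_removeNth j w
  · intro g _
    simp

theorem card_disjTuples_eq_sum (p : Fin (k + 1) → ℕ) (j : Fin (k + 1)) :
    #(disjTuples S p) = ∑ U ∈ S.powersetCard (p j), #(disjTuples (S \ U) (j.removeNth p)) := by
  rw [card_eq_sum_card_fiberwise (f := (· j)) (t := S.powersetCard (p j))]
  · refine sum_congr rfl fun U hU => ?_
    rw [mem_powersetCard] at hU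
    exact card_filter_disjTuples_apply_eq hU.1 hU.2
  · intro w hw
    simpa [mem_disjTuples] using (mem_disjTuples.1 hw).1 j

theorem card_disjTuples_mul_factorial_mul_prod (S : Finset α) (p : Fin k → ℕ)
    (hp : ∑ r, p r ≤ #S) : #(disjTuples S p) * (#S - ∑ r, p r)! * ∏ r, (p r)! = (#S)! := by
  induction k generalizing S with
  | zero =>
    have : disjTuples S p = univ := by
      ext f
      simp only [mem_disjTuples, mem_univ, iff_true]
      exact ⟨fun r => r.elim0, fun i => i.elim0⟩
    simp [this]
  | succ k ih =>
    rw [Fin.sum_univ_succ] at hp ⊢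
    have hterm : ∀ U ∈ S.powersetCard (p 0), #(disjTuples (S \ U) (Fin.removeNth 0 p)) *
        (#S - (p 0 + ∑ r : Fin k, p r.succ))! * ∏ r : Fin k, (p r.succ)! = (#S - p 0)! := by
      intro U hU
      rw [mem_powersetCard] at hU
      have hcard : #(S \ U) = #S - p 0 := by rw [card_sdiff_of_subset hU.1, hU.2]
      rw [Fin.removeNth_zero, Nat.sub_add_eq, ← hcard]
      exact ih (S \ U) (Fin.tail p) (by rw [hcard]; simp only [Fin.tail]; omega)
    calc #(disjTuples S p) * (#S - (p 0 + ∑ r : Fin k, p r.succ))! * ∏ r, (p r)!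
        = (∑ U ∈ S.powersetCard (p 0), #(disjTuples (S \ U) (Fin.removeNth 0 p)) *
            (#S - (p 0 + ∑ r : Fin k, p r.succ))! * ∏ r : Fin k, (p r.succ)!) * (p 0)! := by
          rw [card_disjTuples_eq_sum p 0, sum_mul, sum_mul, sum_mul, Fin.prod_univ_succ]
          refine sum_congr rfl fun _ _ => by ring
      _ = (#S).choose (p 0) * (#S - p 0)! * (p 0)! := by
          rw [sum_congr rfl hterm, sum_const, card_powersetCard, smul_eq_mul]
      _ = (#S)! := by
          rw [mul_right_comm]; exact Nat.choose_mul_factorial_mul_factorial (by omega)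

theorem card_disjTuples_pos {p : Fin k → ℕ} (hp : ∑ r, p r ≤ #S) : 0 < #(disjTuples S p) := by
  have h := card_disjTuples_mul_factorial_mul_prod S p hp
  refine Nat.pos_of_ne_zero fun h0 => Nat.factorial_ne_zero #S ?_
  rw [← h, h0, zero_mul, zero_mul]

theorem card_biUnion_of_mem_disjTuples {p : Fin k → ℕ} {f : Fin k → Finset α}
    (hf : f ∈ disjTuples S p) : #(univ.biUnion f) = ∑ r, p r := by
  rw [mem_disjTuples] at hf
  rw [card_biUnion fun a _ b _ hab => hf.2 a b hab]
  exact sum_congr rfl fun r _ => (hf.1 r).2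

theorem sum_le_card_of_mem_disjTuples {p : Fin k → ℕ} {f : Fin k → Finset α}
    (hf : f ∈ disjTuples S p) : ∑ r, p r ≤ #S :=
  card_biUnion_of_mem_disjTuples hf ▸
    card_le_card (biUnion_subset.2 fun r _ => ((mem_disjTuples.1 hf).1 r).1)

theorem card_disjTuples_congr {T : Finset α} (p : Fin k → ℕ) (hST : #S = #T) :
    #(disjTuples S p) = #(disjTuples T p) := by
  by_cases hp : ∑ r, p r ≤ #S
  · have hS := card_disjTuples_mul_factorial_mul_prod S p hp
    rw [hST, ← card_disjTuples_mul_factorial_mul_prod T p (hST ▸ hp), mul_assoc,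
      mul_assoc] at hS
    exact Nat.eq_of_mul_eq_mul_right
      (Nat.mul_pos (Nat.factorial_pos _) (prod_pos fun r _ => Nat.factorial_pos _)) hS
  · have hempty : ∀ T : Finset α, #T = #S → #(disjTuples T p) = 0 := fun T hT =>
      card_eq_zero.2 <| eq_empty_of_forall_notMem fun f hf =>
        hp (hT ▸ sum_le_card_of_mem_disjTuples hf)
    rw [hempty S rfl, hempty T hST.symm]

theorem choose_mul_card_filter_disjTuples_apply_eq_le (p : Fin k → ℕ) (j : Fin k)
    (U : Finset α) :
    (#S).choose (p j) * #((disjTuples S p).filter (· j = U)) ≤ #(disjTuples S p) := by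
  obtain ⟨k, rfl⟩ : ∃ k', k = k' + 1 := ⟨k - 1, by have := j.pos; omega⟩
  by_cases hU : U ⊆ S ∧ #U = p j
  swap
  · suffices (disjTuples S p).filter (· j = U) = ∅ by simp [this]
    refine filter_eq_empty_iff.2 fun w hw hwU => hU ?_
    exact hwU ▸ (mem_disjTuples.1 hw).1 j
  rw [card_filter_disjTuples_apply_eq hU.1 hU.2, card_disjTuples_eq_sum p j, ← hU.2,
    ← card_powersetCard, ← smul_eq_mul, ← sum_const]
  refine (sum_congr rfl fun V hV => ?_).le
  rw [mem_powersetCard] at hV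
  refine card_disjTuples_congr _ ?_
  rw [card_sdiff_of_subset hU.1, card_sdiff_of_subset hV.1, hV.2]

/-- Each pair `(j, U)` is met by only a `1 / C(|S|, u)` fraction of the tuples. -/
theorem choose_le_card_of_forall_exists_mem {p : Fin k → ℕ} (hp : ∑ r, p r ≤ #S) {u : ℕ}
    (B : Finset (Fin k × Finset α)) (hBp : ∀ x ∈ B, p x.1 = u)
    (hB : ∀ w ∈ disjTuples S p, ∃ j, (j, w j) ∈ B) : (#S).choose u ≤ #B := by
  set T := disjTuples S p
  have hcover : T ⊆ B.biUnion fun x => T.filter (· x.1 = x.2) := by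
    intro w hw
    obtain ⟨j, hj⟩ := hB w hw
    exact mem_biUnion.2 ⟨_, hj, mem_filter.2 ⟨hw, rfl⟩⟩
  refine Nat.le_of_mul_le_mul_right ?_ (card_disjTuples_pos hp)
  calc (#S).choose u * #T
      ≤ (#S).choose u * ∑ x ∈ B, #(T.filter (· x.1 = x.2)) :=
        Nat.mul_le_mul_left _ ((card_le_card hcover).trans card_biUnion_le)
    _ = ∑ x ∈ B, (#S).choose (p x.1) * #(T.filter (· x.1 = x.2)) := by
        rw [mul_sum]; exact sum_congr rfl fun x hx => by rw [hBp x hx]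
    _ ≤ ∑ _x ∈ B, #T :=
        sum_le_sum fun x _ => choose_mul_card_filter_disjTuples_apply_eq_le p _ _
    _ = #B * #T := by rw [sum_const, smul_eq_mul]

theorem disjoint_of_subset_compl_biUnion (f : Fin k → Finset α) (r : Fin k)
    {U : Finset α} (hU : U ⊆ (univ.biUnion f)ᶜ) : Disjoint (f r) U :=
  (subset_compl_iff_disjoint_right.1 hU).symm.mono_left (subset_biUnion_of_mem f (mem_univ r))

theorem removeNth_mem_disjTuples_compl {p : Fin (k + 1) → ℕ} {f : Fin (k + 1) → Finset α}
    (hf : f ∈ disjTuples univ p) (r : Fin (k + 1)) {U : Finset α}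
    (hU : U ⊆ (univ.biUnion f)ᶜ) : r.removeNth f ∈ disjTuples (f r ∪ U)ᶜ (r.removeNth p) := by
  rw [mem_disjTuples] at hf ⊢
  refine ⟨fun i => ⟨?_, (hf.1 _).2⟩,
    fun a b hab => hf.2 _ _ (r.succAbove_right_injective.ne hab)⟩
  rw [subset_compl_iff_disjoint_right, disjoint_union_right]
  exact ⟨hf.2 _ _ (r.succAbove_ne i), disjoint_of_subset_compl_biUnion f (r.succAbove i) hU⟩

end DisjTuples

section Matching

variable {n s m u : ℕ} {F : Finset (Finset (Fin n))}

theorem tuples_eq_disjTuples (p : Fin s → ℕ) : tuples n s p = disjTuples univ p := by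
  ext f
  simp [tuples, mem_disjTuples]

theorem card_compl_biUnion_of_mem_tuples {f : Fin s → Finset (Fin n)}
    (hf : f ∈ tuples n s fun _ => m) : #(univ.biUnion f)ᶜ = n - s * m := by
  rw [tuples_eq_disjTuples] at hf
  simp [card_compl, card_biUnion_of_mem_disjTuples hf]

theorem hasMatching_of_disjoint {g : Fin s → Finset (Fin n)} (hgF : ∀ r, g r ∈ F)
    (hg : ∀ i j, i ≠ j → Disjoint (g i) (g j)) (hne : ∀ r, (g r).Nonempty) :
    HasMatching F s := by
  have hinj : Function.Injective g := fun a b hab => by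
    by_contra hab'
    have := hg a b hab'
    rw [hab, disjoint_self, bot_eq_empty] at this
    exact (hne b).ne_empty this
  refine ⟨univ.image g, fun A hA => ?_, by simp [card_image_of_injective _ hinj], ?_⟩
  · obtain ⟨r, -, rfl⟩ := mem_image.1 hA
    exact hgF r
  · rw [coe_image]
    rintro _ ⟨a, -, rfl⟩ _ ⟨b, -, rfl⟩ hab
    exact hg a b fun h => hab (h ▸ rfl)

def badExtensions (F : Finset (Finset (Fin n))) (f : Fin s → Finset (Fin n)) (u : ℕ) :
    Finset (Fin s × Finset (Fin n)) :=
  (univ.filter (f · ∉ F) ×ˢ (univ.biUnion f)ᶜ.powersetCard u).filter fun x => f x.1 ∪ x.2 ∉ F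

/-- Otherwise the sets `f r ∪ w r` would be `s` disjoint members of `F`. They are nonempty: for
`f r ∈ F` we have `w r = ∅`, but `f r ≠ ∅` since `f r₀ ∉ F` has the same size. -/
theorem exists_mem_badExtensions (hF : ¬HasMatching F s) {f : Fin s → Finset (Fin n)}
    (hf : f ∈ tuples n s fun _ => m) (hu : 1 ≤ u) {r₀ : Fin s} (hr₀ : f r₀ ∉ F)
    {w : Fin s → Finset (Fin n)}
    (hw : w ∈ disjTuples (univ.biUnion f)ᶜ fun r => if f r ∈ F then 0 else u) :
    ∃ r, (r, w r) ∈ badExtensions F f u := by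
  rw [tuples_eq_disjTuples, mem_disjTuples] at hf
  rw [mem_disjTuples] at hw
  by_contra! hbad
  refine hF (hasMatching_of_disjoint (g := fun r => f r ∪ w r) (fun r => ?_)
    (fun a b hab => ?_) (fun r => ?_))
  · by_cases hr : f r ∈ F
    · have : w r = ∅ := card_eq_zero.1 (by simp [(hw.1 r).2, hr])
      simpa [this] using hr
    · by_contra h
      exact hbad r (by simp [badExtensions, hr, h, (hw.1 r).1, (hw.1 r).2])
  · simp only [disjoint_union_left, disjoint_union_right]
    exact ⟨⟨hf.2 a b hab, (disjoint_of_subset_compl_biUnion f b (hw.1 a).1).symm⟩,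
      disjoint_of_subset_compl_biUnion f a (hw.1 b).1, hw.2 a b hab⟩
  · by_cases hr : f r ∈ F
    · refine (nonempty_of_ne_empty fun h => hr₀ ?_).mono subset_union_left
      have : f r₀ = ∅ := card_eq_zero.1 (by rw [(hf.1 r₀).2, ← (hf.1 r).2, h, card_empty])
      rwa [this, ← h]
    · exact (card_pos.1 (by simp [(hw.1 r).2, hr]; omega)).mono subset_union_right

theorem choose_le_card_badExtensions (hF : ¬HasMatching F s) {f : Fin s → Finset (Fin n)}
    (hf : f ∈ tuples n s fun _ => m) (hu : 1 ≤ u) (hR : 0 < #(univ.filter (f · ∉ F)))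
    (hRu : #(univ.filter (f · ∉ F)) * u ≤ #(univ.biUnion f)ᶜ) :
    (#(univ.biUnion f)ᶜ).choose u ≤ #(badExtensions F f u) := by
  obtain ⟨r₀, hr₀⟩ := card_pos.1 hR
  refine choose_le_card_of_forall_exists_mem (p := fun r => if f r ∈ F then 0 else u) ?_ _
    (fun x hx => ?_) (fun w hw => exists_mem_badExtensions hF hf hu (mem_filter.1 hr₀).2 hw)
  · simpa [sum_ite] using hRu
  · simp only [badExtensions, mem_filter, mem_product] at hx
    simp [hx.1.1.2]

theorem choose_mul_sum_card_Ctuples_le (hF : ¬HasMatching F s) (hu : 1 ≤ u) :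
    (n - s * m).choose u * ∑ i ∈ Icc 1 ((n - s * m) / u), #(Ctuples n s F (fun _ => m) i)
      ≤ ∑ f ∈ tuples n s (fun _ => m), #(badExtensions F f u) := by
  set R : (Fin s → Finset (Fin n)) → ℕ := fun f => #(univ.filter (f · ∉ F))
  calc (n - s * m).choose u * ∑ i ∈ Icc 1 ((n - s * m) / u), #(Ctuples n s F (fun _ => m) i)
      = ∑ i ∈ Icc 1 ((n - s * m) / u),
          ∑ f ∈ tuples n s (fun _ => m) with R f = i, (n - s * m).choose u := by
        simp [Ctuples, R, mul_sum, mul_comm]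
    _ ≤ ∑ i ∈ Icc 1 ((n - s * m) / u),
          ∑ f ∈ tuples n s (fun _ => m) with R f = i, #(badExtensions F f u) := by
        refine sum_le_sum fun i hi => sum_le_sum fun f hf => ?_
        rw [mem_Icc] at hi
        obtain ⟨hf, hRf⟩ := mem_filter.1 hf
        rw [← hRf, ← card_compl_biUnion_of_mem_tuples hf] at hi
        rw [← card_compl_biUnion_of_mem_tuples hf]
        exact choose_le_card_badExtensions hF hf hu hi.1 ((Nat.le_div_iff_mul_le hu).1 hi.2)
    _ = ∑ f ∈ tuples n s (fun _ => m) with R f ∈ Icc 1 ((n - s * m) / u),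
          #(badExtensions F f u) := sum_fiberwise_eq_sum_filter _ _ _ _
    _ ≤ ∑ f ∈ tuples n s (fun _ => m), #(badExtensions F f u) :=
        sum_le_sum_of_subset (filter_subset _ _)

/-- The triples are counted through the injection `(f, r, U) ↦ (f r ∪ U, r, f r, r.removeNth f)`. -/
theorem sum_card_badExtensions_le {A₀ : Finset (Fin n)} (hA₀ : #A₀ = m + u) :
    ∑ f ∈ tuples n (s + 1) (fun _ => m), #(badExtensions F f u)
      ≤ ymiss n F (m + u) *
          ((s + 1) * ((m + u).choose m * #(disjTuples A₀ᶜ fun _ : Fin s => m))) := by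
  rw [← Finset.card_sigma]
  calc _ ≤ #((univ.filter fun A : Finset (Fin n) => #A = m + u ∧ A ∉ F).sigma
          fun A => univ ×ˢ A.powersetCard m ×ˢ disjTuples Aᶜ fun _ : Fin s => m) := by
        refine card_le_card_of_injOn
          (fun x => ⟨x.1 x.2.1 ∪ x.2.2, x.2.1, x.1 x.2.1, x.2.1.removeNth x.1⟩) ?_ ?_
        · rintro ⟨f, r, U⟩ hx
          simp only [coe_sigma, Set.mem_sigma_iff, mem_coe, badExtensions, mem_filter,
            mem_product, mem_powersetCard] at hx
          obtain ⟨hf, ⟨-, hU, hUc⟩, hbad⟩ := hx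
          rw [tuples_eq_disjTuples] at hf
          have hfr := ((mem_disjTuples.1 hf).1 r).2
          simp only [coe_sigma, Set.mem_sigma_iff, mem_coe, mem_filter, mem_univ, true_and,
            mem_product, mem_powersetCard]
          refine ⟨⟨?_, hbad⟩, ⟨subset_union_left, hfr⟩, removeNth_mem_disjTuples_compl hf r hU⟩
          rw [card_union_of_disjoint (disjoint_of_subset_compl_biUnion f r hU), hfr, hUc]
        · rintro ⟨f, r, U⟩ hx ⟨f', r', U'⟩ hx' h
          simp only [Sigma.mk.injEq, Prod.mk.injEq, heq_eq_eq] at h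
          obtain ⟨hA, rfl, hB, hrest⟩ := h
          simp only [coe_sigma, Set.mem_sigma_iff, mem_coe, badExtensions, mem_filter,
            mem_product, mem_powersetCard] at hx hx'
          obtain ⟨-, ⟨-, hU, -⟩, -⟩ := hx
          obtain ⟨-, ⟨-, hU', -⟩, -⟩ := hx'
          replace hU := union_sdiff_cancel_left (disjoint_of_subset_compl_biUnion f r hU)
          replace hU' := union_sdiff_cancel_left (disjoint_of_subset_compl_biUnion f' r hU')
          have hff' : f = f' := by
            rw [← Fin.insertNth_self_removeNth r f, ← Fin.insertNth_self_removeNth r f', hB,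
              hrest]
          subst hff'
          rw [← hU, ← hU', hA]
    _ = _ := by
        rw [Finset.card_sigma, ← smul_eq_mul, ymiss, ← sum_const]
        refine sum_congr rfl fun A hA => ?_
        simp only [mem_filter] at hA
        rw [card_product, card_product, Finset.card_univ, Fintype.card_fin, card_powersetCard,
          hA.2.1, card_disjTuples_congr (T := A₀ᶜ) _ (by rw [card_compl, card_compl, hA.2.1, hA₀])]

theorem choose_mul_card_tuples_eq {d : ℕ} (hn : n = (s + 1) * m + d) (hu : u ≤ d)
    {A₀ : Finset (Fin n)} (hA₀ : #A₀ = m + u) :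
    d.choose u * #(tuples n (s + 1) fun _ => m)
      = n.choose (m + u) * ((m + u).choose m * #(disjTuples A₀ᶜ fun _ : Fin s => m)) := by
  have hn' : n = s * m + m + d := by rw [hn]; ring
  have hN := card_disjTuples_mul_factorial_mul_prod (univ : Finset (Fin n))
    (fun _ : Fin (s + 1) => m) (by simp; omega)
  have hN' := card_disjTuples_mul_factorial_mul_prod A₀ᶜ (fun _ : Fin s => m)
    (by simp [card_compl, hA₀]; omega)
  simp only [sum_const, Finset.card_univ, Fintype.card_fin, smul_eq_mul, prod_const, card_compl,
    hA₀] at hN hN'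
  rw [show n - (s + 1) * m = d by omega] at hN
  rw [show n - (m + u) - s * m = d - u by omega] at hN'
  rw [tuples_eq_disjTuples]
  set N := #(disjTuples (univ : Finset (Fin n)) fun _ : Fin (s + 1) => m)
  set N' := #(disjTuples A₀ᶜ fun _ : Fin s => m)
  have hd := Nat.choose_mul_factorial_mul_factorial hu
  have hnu := Nat.choose_mul_factorial_mul_factorial (show m + u ≤ n by omega)
  have hmu := Nat.choose_mul_factorial_mul_factorial (show m ≤ m + u by omega)
  rw [Nat.add_sub_cancel_left] at hmu
  refine Nat.eq_of_mul_eq_mul_right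
    (by positivity : 0 < u ! * (d - u)! * m ! ^ (s + 1)) ?_
  calc d.choose u * N * (u ! * (d - u)! * m ! ^ (s + 1))
      = (d.choose u * u ! * (d - u)!) * N * m ! ^ (s + 1) := by ring
    _ = n ! := by rw [hd, ← hN]; ring
    _ = n.choose (m + u) * ((m + u).choose m * m ! * u !) * (N' * (d - u)! * m ! ^ s) := by
        rw [hmu, hN', hnu]
    _ = _ := by ring

theorem choose_mul_sum_card_Ctuples_le_mul_ymiss {d : ℕ} (hF : ¬HasMatching F (s + 1))
    (hu1 : 1 ≤ u) (hu : u ≤ d) (hn : n = (s + 1) * m + d) :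
    n.choose (m + u) * ∑ i ∈ Icc 1 (d / u), #(Ctuples n (s + 1) F (fun _ => m) i)
      ≤ (s + 1) * #(tuples n (s + 1) fun _ => m) * ymiss n F (m + u) := by
  have hn' : n = s * m + m + d := by rw [hn]; ring
  obtain ⟨A₀, -, hA₀⟩ := exists_subset_card_eq (s := (univ : Finset (Fin n)))
    (n := m + u) (by simp; omega)
  have hid := choose_mul_card_tuples_eq hn hu hA₀
  set N' := #(disjTuples A₀ᶜ fun _ : Fin s => m)
  have hN' : 0 < N' := card_disjTuples_pos (by simp [card_compl, hA₀]; omega)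
  have hlow := choose_mul_sum_card_Ctuples_le (m := m) hF hu1
  rw [show n - (s + 1) * m = d by omega] at hlow
  refine Nat.le_of_mul_le_mul_right ?_
    (Nat.mul_pos (Nat.choose_pos (by omega : m ≤ m + u)) hN')
  calc (n.choose (m + u) * ∑ i ∈ Icc 1 (d / u), #(Ctuples n (s + 1) F (fun _ => m) i))
        * ((m + u).choose m * N')
      = #(tuples n (s + 1) fun _ => m)
          * (d.choose u * ∑ i ∈ Icc 1 (d / u), #(Ctuples n (s + 1) F (fun _ => m) i)) := by
        rw [mul_right_comm, ← hid]; ring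
    _ ≤ #(tuples n (s + 1) fun _ => m)
          * (ymiss n F (m + u) * ((s + 1) * ((m + u).choose m * N'))) :=
        Nat.mul_le_mul_left _ (hlow.trans (sum_card_badExtensions_le hA₀))
    _ = _ := by ring

end Matching

theorem stmt16_general (n s m l u : ℕ) (hu1 : 1 ≤ u)
    (hu2 : u ≤ s - l) (hn : n = s * m + s - l)
    (F : Finset (Finset (Fin n))) (hF : ¬ HasMatching F s) :
    (ymiss n F (m + u) : ℚ)
      ≥ 1 / (s : ℚ) * (n.choose (m + u) : ℚ)
        * ∑ i ∈ Finset.Icc 1 ((s - l) / u), Xe n s m F i := by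
  obtain ⟨s, rfl⟩ : ∃ t, s = t + 1 := ⟨s - 1, by omega⟩
  have hle := choose_mul_sum_card_Ctuples_le_mul_ymiss (m := m) hF hu1 hu2 (by omega)
  have hN : (0 : ℚ) < #(tuples n (s + 1) fun _ => m) := by
    rw [tuples_eq_disjTuples]
    exact_mod_cast card_disjTuples_pos (by simp; omega)
  simp only [Xe, ← sum_div]
  rw [ge_iff_le, show ∀ a b c d : ℚ, 1 / a * b * (c / d) = b * c / (a * d) by intros; ring,
    div_le_iff₀ (by positivity), mul_comm (ymiss n F (m + u) : ℚ)]
  exact_mod_cast hle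

theorem stmt16 (n s m l u : ℕ) (hl1 : 1 ≤ l) (hls : l ≤ s) (hu1 : 1 ≤ u)
    (hu2 : u ≤ s - l) (hn : n = s * m + s - l)
    (F : Finset (Finset (Fin n))) (hF : ¬ HasMatching F s) :
    (ymiss n F (m + u) : ℚ)
      ≥ 1 / (s : ℚ) * (n.choose (m + u) : ℚ)
        * ∑ i ∈ Finset.Icc 1 ((s - l) / u), Xe n s m F i :=
  stmt16_general n s m l u hu1 hu2 hn F hF
end

section
/- For n = sm+1 with s, m ≥ 20, the family W(m,s) = {W ⊆ [n] : |W ∩ [sm-1]| ≥ m} satisfies ν(W(m,s)) = s-1 and |W(m,s)| > |P(s,m,s-1)|, where P(s,m,s-1) = {P ⊆ [n] : |P| + |P ∩ [s-2]| ≥ m+1}. In particular, P(s,m,l) is not extremal for l = s-1. -/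
/-- The family `W(m,s) = {W ⊆ [n] : |W ∩ [sm-1]| ≥ m}` for `n = sm+1`. -/
def Wfam (n m s : ℕ) : Finset (Finset (Fin n)) :=
  Finset.univ.filter fun W => m ≤ (W.filter fun x => x.val < s * m - 1).card

/-- The family `P(s,m,l) = {P ⊆ [n] : |P| + |P ∩ [l-1]| ≥ m+1}`. -/
def Pfam (n m l : ℕ) : Finset (Finset (Fin n)) :=
  Finset.univ.filter fun P =>
    m + 1 ≤ P.card + (P.filter fun x => x.val < l - 1).card

/-!
Split `[n]` into `Y = [0, s-2)`, `Z = [s-2, sm-1)` and `E = {sm-1, sm}`. A set lies in `W \ P`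
exactly when it is an `m`-subset of `Z`, so `|W \ P| = C(sm-s+1, m)`, while every set outside
`W` meets `Y ∪ Z` in fewer than `m` points, so `|P \ W| ≤ 4 ∑_{c<m} C(sm-1, c)`. That sum is
dominated by its last term, `(s-2) ∑_{c<m} C(sm-1, c) ≤ C(sm-1, m)`, and
`C(sm-1, m) ≤ 4 C(sm-s+1, m)`: each of the `s-2` ratios `C(N+1, m) / C(N, m)` is at most
`1 + m/(sm-s+2-m)`, and the product stays below `exp (5/4) < 4`. For the matching number, `s-1`
consecutive blocks of length `m` fit into `[sm-1]`, whereas `s` disjoint members of `W` would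
need `sm` points there.
-/

open Finset Function

theorem mul_sum_range_le_of_succ_mul_le {f : ℕ → ℕ} {r k : ℕ}
    (h : ∀ c < k, (r + 1) * f c ≤ f (c + 1)) :
    r * ∑ c ∈ range (k + 1), f c ≤ (r + 1) * f k := by
  induction k with
  | zero => simpa using Nat.mul_le_mul_right (f 0) r.le_succ
  | succ k ih =>
    rw [sum_range_succ, mul_add]
    calc r * ∑ c ∈ range (k + 1), f c + r * f (k + 1)
        ≤ f (k + 1) + r * f (k + 1) := by
          gcongr; exact (ih fun c hc => h c (by omega)).trans (h k k.lt_succ_self)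
      _ = (r + 1) * f (k + 1) := by ring

namespace Nat

theorem mul_choose_le_choose_succ {n k r : ℕ} (h : r * (k + 1) ≤ n - k) :
    r * n.choose k ≤ n.choose (k + 1) := by
  refine Nat.le_of_mul_le_mul_right ?_ k.succ_pos
  calc r * n.choose k * (k + 1) = n.choose k * (r * (k + 1)) := by ring
    _ ≤ n.choose k * (n - k) := Nat.mul_le_mul_left _ h
    _ = n.choose (k + 1) * (k + 1) := (Nat.choose_succ_right_eq n k).symm

theorem choose_add_mul_pow_le (n k m : ℕ) :
    (n + k).choose m * (n + 1 - m) ^ k ≤ n.choose m * (n + 1) ^ k := by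
  induction k with
  | zero => simp
  | succ k ih =>
    have hstep : (n + k + 1).choose m * (n + 1 - m) ≤ (n + k).choose m * (n + 1) := by
      refine Nat.le_of_mul_le_mul_right ?_ (Nat.succ_pos (n + k))
      have hpascal := Nat.choose_mul_succ_eq (n + k) m
      have hcross : (n + 1 - m) * (n + k + 1) ≤ (n + k + 1 - m) * (n + 1) := by
        rcases le_or_gt m (n + 1) with hmn | hmn
        · rw [show n + k + 1 - m = n + 1 - m + k by omega]
          nlinarith [Nat.sub_le (n + 1) m]
        · simp [show n + 1 - m = 0 by omega]
      calc (n + k + 1).choose m * (n + 1 - m) * (n + k + 1)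
          = (n + k + 1).choose m * ((n + 1 - m) * (n + k + 1)) := by ring
        _ ≤ (n + k + 1).choose m * ((n + k + 1 - m) * (n + 1)) := Nat.mul_le_mul_left _ hcross
        _ = (n + k).choose m * (n + 1) * (n + k + 1) := by rw [← mul_assoc, ← hpascal]; ring
    calc (n + (k + 1)).choose m * (n + 1 - m) ^ (k + 1)
        = (n + k + 1).choose m * (n + 1 - m) * (n + 1 - m) ^ k := by ring_nf
      _ ≤ (n + k).choose m * (n + 1) * (n + 1 - m) ^ k := Nat.mul_le_mul_right _ hstep
      _ = (n + k).choose m * (n + 1 - m) ^ k * (n + 1) := by ring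
      _ ≤ n.choose m * (n + 1) ^ k * (n + 1) := Nat.mul_le_mul_right _ ih
      _ = n.choose m * (n + 1) ^ (k + 1) := by ring

theorem add_pow_le_four_mul_pow {b m k : ℕ} (hb : 0 < b) (h : 4 * k * m ≤ 5 * b) :
    (b + m) ^ k ≤ 4 * b ^ k := by
  have hb' : (0 : ℝ) < b := by exact_mod_cast hb
  have hexp : (1 + (m : ℝ) / b) ^ k ≤ 4 := by
    have hkm : (k : ℝ) * (m / b) ≤ 5 / 4 := by
      rw [← mul_div_assoc, div_le_div_iff₀ hb' (by norm_num)]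
      exact_mod_cast (by linarith : k * m * 4 ≤ 5 * b)
    have hlog : (5 / 4 : ℝ) < Real.log 4 := by
      rw [show (4 : ℝ) = 2 ^ 2 by norm_num, Real.log_pow]
      have := Real.log_two_gt_d9; push_cast; linarith
    calc (1 + (m : ℝ) / b) ^ k ≤ Real.exp (m / b) ^ k := by
          gcongr; linarith [Real.add_one_le_exp ((m : ℝ) / b)]
      _ = Real.exp (k * (m / b)) := (Real.exp_nat_mul _ k).symm
      _ ≤ Real.exp (Real.log 4) := Real.exp_le_exp.mpr (by linarith)
      _ = 4 := Real.exp_log (by norm_num)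
  have : ((b + m : ℕ) : ℝ) ^ k ≤ 4 * (b : ℝ) ^ k := by
    calc ((b + m : ℕ) : ℝ) ^ k = (b : ℝ) ^ k * (1 + (m : ℝ) / b) ^ k := by
          rw [← mul_pow]; push_cast; field_simp
      _ ≤ (b : ℝ) ^ k * 4 := by gcongr
      _ = 4 * (b : ℝ) ^ k := mul_comm _ _
  exact_mod_cast this

end Nat

theorem four_mul_sum_range_choose_lt {s m : ℕ} (hs : 19 ≤ s) (hm : 5 ≤ m) :
    4 * ∑ c ∈ range m, (s * m - 1).choose c < (s * m - s + 1).choose m := by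
  have hsm : s * 5 ≤ s * m := Nat.mul_le_mul_left s hm
  have hms : 19 * m ≤ s * m := Nat.mul_le_mul_right m hs
  set N := s * m - 1
  set M := s * m - s + 1
  have hgeom : (s - 2) * ∑ c ∈ range m, N.choose c ≤ (s - 1) * N.choose (m - 1) := by
    have h := mul_sum_range_le_of_succ_mul_le (f := N.choose) (r := s - 2) (k := m - 1)
      fun c hc => Nat.mul_choose_le_choose_succ (by
        have h1 : (s - 2 + 1) * (c + 1) + (c + 1) = s * (c + 1) := by
          rw [← Nat.succ_mul, show (s - 2 + 1).succ = s by omega]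
        have h2 : s * (c + 1) + s ≤ s * m := by
          rw [← Nat.mul_succ]; exact Nat.mul_le_mul_left s (by omega)
        omega)
    rwa [show m - 1 + 1 = m by omega, show s - 2 + 1 = s - 1 by omega] at h
  have hstep : (s - 1) * N.choose (m - 1) ≤ N.choose m := by
    have h := Nat.mul_choose_le_choose_succ (n := N) (k := m - 1) (r := s - 1) (by
      rw [show m - 1 + 1 = m by omega, Nat.sub_one_mul]; omega)
    rwa [show m - 1 + 1 = m by omega] at h
  have hshift : N.choose m ≤ 4 * M.choose m := by
    have hNM : N = M + (s - 2) := by omega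
    have hpow := Nat.choose_add_mul_pow_le M (s - 2) m
    have hfour := Nat.add_pow_le_four_mul_pow (b := M + 1 - m) (m := m) (k := s - 2) (by omega) (by
      rw [Nat.mul_assoc, Nat.sub_mul]; omega)
    rw [show M + 1 - m + m = M + 1 by omega] at hfour
    rw [← hNM] at hpow
    refine Nat.le_of_mul_le_mul_right ?_ (pow_pos (by omega : 0 < M + 1 - m) (s - 2))
    calc N.choose m * (M + 1 - m) ^ (s - 2) ≤ M.choose m * (M + 1) ^ (s - 2) := hpow
      _ ≤ M.choose m * (4 * (M + 1 - m) ^ (s - 2)) := Nat.mul_le_mul_left _ hfour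
      _ = 4 * M.choose m * (M + 1 - m) ^ (s - 2) := by ring
  have hsum : (s - 2) * ∑ c ∈ range m, N.choose c ≤ 4 * M.choose m :=
    hgeom.trans (hstep.trans hshift)
  have hpos : 0 < M.choose m := Nat.choose_pos (by omega)
  have hs2 : 17 ≤ s - 2 := by omega
  nlinarith

namespace Finset

theorem card_powerset_filter_card_lt {α : Type*} (X : Finset α) (m : ℕ) :
    #{C ∈ X.powerset | #C < m} = ∑ c ∈ range m, (#X).choose c := by
  rw [card_eq_sum_card_fiberwise (f := card) (t := range m)
    fun C hC => mem_coe.2 (mem_range.2 (mem_filter.1 hC).2)]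
  refine sum_congr rfl fun c hc => ?_
  rw [filter_filter, ← card_powersetCard]
  congr 1
  ext C
  simp only [mem_filter, mem_powerset, mem_powersetCard]
  constructor
  · exact fun h => ⟨h.1, h.2.2⟩
  · rintro ⟨hCX, rfl⟩; exact ⟨hCX, mem_range.1 hc, rfl⟩

variable {α : Type*} [Fintype α] [DecidableEq α]

theorem card_filter_card_filter_lt_le (p : α → Prop) [DecidablePred p] (m : ℕ) :
    #{P : Finset α | #{x ∈ P | p x} < m}
      ≤ 2 ^ #{x | ¬ p x} * ∑ c ∈ range m, (#{x | p x}).choose c := by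
  rw [← card_powerset_filter_card_lt, ← card_powerset, ← card_product]
  refine card_le_card_of_injOn (fun P => ({x ∈ P | ¬ p x}, {x ∈ P | p x})) ?_ ?_
  · intro P hP
    have hsub (r : α → Prop) [DecidablePred r] :
        {x ∈ P | r x} ∈ ({x | r x} : Finset α).powerset :=
      mem_powerset.2 (filter_subset_filter r (subset_univ P))
    exact mem_product.2 ⟨hsub _, mem_filter.2 ⟨hsub p, by simpa using hP⟩⟩
  · intro P _ Q _ h
    simp only [Prod.mk.injEq] at h
    rw [← filter_union_filter_not_eq p P, ← filter_union_filter_not_eq p Q, h.1, h.2]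

theorem filter_sdiff_filter_eq_powersetCard (p q : α → Prop) [DecidablePred p] [DecidablePred q]
    (m : ℕ) :
    ({P | m ≤ #{x ∈ P | p x}} : Finset (Finset α)) \
        ({P | m + 1 ≤ #P + #{x ∈ P | q x}} : Finset (Finset α))
      = powersetCard m (univ.filter p \ univ.filter q) := by
  ext P
  simp only [mem_sdiff, mem_filter, mem_univ, true_and, not_le, mem_powersetCard]
  have hsub : P ⊆ univ.filter p \ univ.filter q ↔ ∀ x ∈ P, p x ∧ ¬ q x := by
    simp [subset_iff]
  rw [hsub]
  constructor
  · rintro ⟨hp, hq⟩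
    have hle : #{x ∈ P | p x} ≤ #P := card_filter_le P p
    have hall_p := card_filter_eq_iff.1 (show #{x ∈ P | p x} = #P by omega)
    have hno_q := card_filter_eq_zero_iff.1 (show #{x ∈ P | q x} = 0 by omega)
    exact ⟨fun x hx => ⟨hall_p x hx, hno_q x hx⟩, by omega⟩
  · rintro ⟨hpq, rfl⟩
    rw [filter_true_of_mem fun x hx => (hpq x hx).1, filter_false_of_mem fun x hx => (hpq x hx).2]
    simp

end Finset

theorem HasMatching.of_pairwise_disjoint {n : ℕ} {F : Finset (Finset (Fin n))} {ι : Type*}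
    [Fintype ι] (f : ι → Finset (Fin n)) (hF : ∀ i, f i ∈ F) (hne : ∀ i, (f i).Nonempty)
    (hf : Pairwise (Disjoint on f)) : HasMatching F (Fintype.card ι) := by
  classical
  have hinj : Injective f := fun i j hij => by
    by_contra hne'
    have := hf hne'
    rw [onFun, hij, disjoint_self, bot_eq_empty] at this
    exact (hne j).ne_empty this
  refine ⟨univ.image f, fun A hA => ?_, by rw [card_image_of_injective _ hinj, card_univ], ?_⟩
  · obtain ⟨i, -, rfl⟩ := mem_image.1 hA
    exact hF i
  · rintro _ hA _ hB hAB
    obtain ⟨i, -, rfl⟩ := mem_image.1 hA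
    obtain ⟨j, -, rfl⟩ := mem_image.1 hB
    exact hf fun hij => hAB (hij ▸ rfl)

theorem HasMatching.mul_le_card_filter {n k m : ℕ} {F : Finset (Finset (Fin n))}
    (p : Fin n → Prop) [DecidablePred p] (hF : ∀ A ∈ F, m ≤ #{x ∈ A | p x})
    (h : HasMatching F k) : k * m ≤ #{x | p x} := by
  obtain ⟨𝒜, h𝒜F, rfl, h𝒜⟩ := h
  calc #𝒜 * m = ∑ _A ∈ 𝒜, m := by rw [sum_const, smul_eq_mul]
    _ ≤ ∑ A ∈ 𝒜, #{x ∈ A | p x} := sum_le_sum fun A hA => hF A (h𝒜F hA)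
    _ = #(𝒜.biUnion fun A => {x ∈ A | p x}) := by
        refine (card_biUnion fun A hA B hB hAB => ?_).symm
        exact (h𝒜 hA hB hAB).mono (filter_subset p A) (filter_subset p B)
    _ ≤ #{x | p x} := card_le_card fun x hx => by
        obtain ⟨A, -, hxA⟩ := mem_biUnion.1 hx
        exact mem_filter.2 ⟨mem_univ x, (mem_filter.1 hxA).2⟩

theorem mem_Wfam {n m s : ℕ} {W : Finset (Fin n)} :
    W ∈ Wfam n m s ↔ m ≤ #{x ∈ W | x.val < s * m - 1} := by
  simp [Wfam]

theorem hasMatching_Wfam {s m : ℕ} (hm : 0 < m) : HasMatching (Wfam (s * m + 1) m s) (s - 1) := by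
  set f : Fin (s - 1) → Finset (Fin (s * m + 1)) := fun i => {x | x.val / m = i.val}
  have hblock (i : Fin (s - 1)) : m ≤ #{x ∈ f i | x.val < s * m - 1} := by
    have hi : i.val * m + m ≤ s * m - m := by
      rw [← Nat.succ_mul, ← Nat.sub_one_mul]; exact Nat.mul_le_mul_right m i.isLt
    rw [← card_map Fin.valEmbedding]
    calc m = #(Ico (i.val * m) (i.val * m + m)) := by simp
      _ ≤ _ := card_le_card fun y hy => mem_map.2 ?_
    obtain ⟨hy₁, hy₂⟩ := mem_Ico.1 hy
    refine ⟨⟨y, by omega⟩,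
      mem_filter.2 ⟨mem_filter.2 ⟨mem_univ _, ?_⟩, show y < s * m - 1 by omega⟩, rfl⟩
    exact Nat.div_eq_of_lt_le hy₁ (by rw [Nat.succ_mul]; omega)
  have h := HasMatching.of_pairwise_disjoint f
    (fun i => mem_Wfam.2 (hblock i))
    (fun i => card_pos.1 (hm.trans_le ((hblock i).trans (card_filter_le _ _))))
    (fun i j hij => disjoint_left.2 fun x hxi hxj =>
      hij (Fin.ext ((mem_filter.1 hxi).2.symm.trans (mem_filter.1 hxj).2)))
  rwa [Fintype.card_fin] at h

theorem not_hasMatching_Wfam {s m : ℕ} (hs : 0 < s) (hm : 0 < m) :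
    ¬ HasMatching (Wfam (s * m + 1) m s) s := fun h => by
  have hle := h.mul_le_card_filter (fun x => x.val < s * m - 1) fun A hA => mem_Wfam.1 hA
  rw [Fin.card_filter_val_lt] at hle
  have := Nat.mul_pos hs hm
  omega

theorem card_Wfam_sdiff_Pfam {s m : ℕ} (hs : 2 ≤ s) (hm : 0 < m) :
    #(Wfam (s * m + 1) m s \ Pfam (s * m + 1) m (s - 1)) = (s * m - s + 1).choose m := by
  have : s ≤ s * m := Nat.le_mul_of_pos_right s hm
  rw [Wfam, Pfam, filter_sdiff_filter_eq_powersetCard, card_powersetCard,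
    card_sdiff_of_subset (monotone_filter_right _ fun x _ (hx : x.val < s - 1 - 1) => by omega),
    Fin.card_filter_val_lt, Fin.card_filter_val_lt]
  congr 1
  omega

theorem card_sdiff_Wfam_le {s m : ℕ} (F : Finset (Finset (Fin (s * m + 1)))) :
    #(F \ Wfam (s * m + 1) m s) ≤ 4 * ∑ c ∈ range m, (s * m - 1).choose c := by
  have hlow : #{x : Fin (s * m + 1) | x.val < s * m - 1} = s * m - 1 := by
    rw [Fin.card_filter_val_lt]; omega
  have htop : #{x : Fin (s * m + 1) | ¬ x.val < s * m - 1} ≤ 2 := by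
    have := card_filter_add_card_filter_not (s := univ) fun x : Fin (s * m + 1) => x.val < s * m - 1
    rw [hlow, card_univ, Fintype.card_fin] at this
    omega
  calc #(F \ Wfam (s * m + 1) m s)
      ≤ #{P : Finset (Fin (s * m + 1)) | #{x ∈ P | x.val < s * m - 1} < m} :=
        card_le_card fun P hP =>
          mem_filter.2 ⟨mem_univ _, not_le.1 fun h => (mem_sdiff.1 hP).2 (mem_Wfam.2 h)⟩
    _ ≤ 2 ^ #{x : Fin (s * m + 1) | ¬ x.val < s * m - 1}
          * ∑ c ∈ range m, (#{x : Fin (s * m + 1) | x.val < s * m - 1}).choose c :=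
        card_filter_card_filter_lt_le _ m
    _ ≤ 2 ^ 2 * ∑ c ∈ range m, (s * m - 1).choose c := by
        rw [hlow]; gcongr; norm_num
    _ = 4 * ∑ c ∈ range m, (s * m - 1).choose c := by norm_num

theorem stmt18 (s m n : ℕ) (hs : 20 ≤ s) (hm : 20 ≤ m) (hn : n = s * m + 1) :
    (HasMatching (Wfam n m s) (s - 1) ∧ ¬ HasMatching (Wfam n m s) s)
      ∧ (Pfam n m (s - 1)).card < (Wfam n m s).card := by
  subst hn
  refine ⟨⟨hasMatching_Wfam (by omega), not_hasMatching_Wfam (by omega) (by omega)⟩, ?_⟩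
  rw [← card_sdiff_lt_card_sdiff_iff, card_Wfam_sdiff_Pfam (by omega) (by omega)]
  exact (card_sdiff_Wfam_le _).trans_lt (four_mul_sum_range_choose_lt (by omega) (by omega))
end
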